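/- arXiv:1101.1161 — 8 statements merged into one kernel-verified Lean document; each statement's English description precedes it below -/
import Mathlib

section
/- Let (a_n)_{n≥0} be a sequence of nonnegative reals and A(t) = ∑_{n=0}^∞ a_n t^n. Let h : ℕ → (0,1) be an increasing sequence such that 0 < liminf_{n→∞} h(n)^n ≤ limsup_{n→∞} h(n)^n < 1. Suppose there exist N₀ ∈ ℕ and x > 0 such that for every N ≥ N₀ and every integer m ≥ 0, ∑_{n=mN}^{(m+1)N−1} a_n ≤ x·∑_{n=0}^{N−1} a_n. Then A(h(n)) < ∞ for all n ≥ N₀, and there exist constants 0 < c₁ < c₂ and M ∈ ℕ such that c₁·∑_{k=0}^{n} a_k ≤ A(h(n)) ≤ c₂·∑_{k=0}^{n} a_k for all n ≥ M. -/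
/-! Cutting the power series into blocks of length `N`, the `m`-th block contributes at most
`t ^ (m N)` times the block sum, hence at most `(t ^ N) ^ m · x ∑_{k<N} a_k`; summing the geometric
series gives `A(t) ≤ x ∑_{k<N} a_k / (1 - t ^ N)`. Taking `t = h(n)` and `N = n + 1`, the factor
`1 / (1 - h(n) ^ (n+1))` stays bounded because `limsup h(n)^n < 1`. Conversely
`A(h(n)) ≥ h(n) ^ n ∑_{k ≤ n} a_k`, and `h(n) ^ n` stays away from `0` because `liminf h(n)^n > 0`. -/

open Finset Filter

section BlockBound

variable {a : ℕ → ℝ} {t : ℝ}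

lemma sum_Ico_mul_pow_le_pow_mul_sum (ha : ∀ n, 0 ≤ a n) (ht0 : 0 ≤ t) (ht1 : t ≤ 1)
    (m n : ℕ) : ∑ k ∈ Ico m n, a k * t ^ k ≤ t ^ m * ∑ k ∈ Ico m n, a k := by
  rw [mul_sum]
  refine sum_le_sum fun k hk => ?_
  rw [mul_comm (t ^ m)]
  exact mul_le_mul_of_nonneg_left (pow_le_pow_of_le_one ht0 ht1 (mem_Ico.1 hk).1) (ha k)

lemma sum_range_mul_mul_pow_le_of_block_le (ha : ∀ n, 0 ≤ a n) (ht0 : 0 ≤ t) (ht1 : t ≤ 1)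
    {N : ℕ} {B : ℝ} (hb : ∀ m : ℕ, ∑ n ∈ Ico (m * N) ((m + 1) * N), a n ≤ B) (K : ℕ) :
    ∑ k ∈ range (K * N), a k * t ^ k ≤ B * ∑ j ∈ range K, (t ^ N) ^ j := by
  induction K with
  | zero => simp
  | succ K ih =>
    rw [range_eq_Ico, ← sum_Ico_consecutive _ (Nat.zero_le (K * N))
      (Nat.mul_le_mul_right N K.le_succ), ← range_eq_Ico, sum_range_succ, mul_add]
    refine add_le_add ih ?_
    calc ∑ k ∈ Ico (K * N) ((K + 1) * N), a k * t ^ k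
        ≤ t ^ (K * N) * ∑ k ∈ Ico (K * N) ((K + 1) * N), a k :=
          sum_Ico_mul_pow_le_pow_mul_sum ha ht0 ht1 _ _
      _ ≤ t ^ (K * N) * B := mul_le_mul_of_nonneg_left (hb K) (pow_nonneg ht0 _)
      _ = B * (t ^ N) ^ K := by rw [← pow_mul, mul_comm K, mul_comm]

lemma sum_range_mul_pow_le_of_block_le (ha : ∀ n, 0 ≤ a n) (ht0 : 0 ≤ t) (ht1 : t < 1)
    {N : ℕ} (hN : 0 < N) {B : ℝ} (hb : ∀ m : ℕ, ∑ n ∈ Ico (m * N) ((m + 1) * N), a n ≤ B)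
    (K : ℕ) : ∑ k ∈ range K, a k * t ^ k ≤ B / (1 - t ^ N) := by
  have hB : 0 ≤ B := (sum_nonneg fun k _ => ha k).trans (by simpa using hb 0)
  have htN0 : 0 ≤ t ^ N := pow_nonneg ht0 N
  have htN1 : t ^ N < 1 := pow_lt_one₀ ht0 ht1 hN.ne'
  calc ∑ k ∈ range K, a k * t ^ k ≤ ∑ k ∈ range (K * N), a k * t ^ k :=
        sum_le_sum_of_subset_of_nonneg (range_subset_range.2 (Nat.le_mul_of_pos_right K hN))
          fun k _ _ => mul_nonneg (ha k) (pow_nonneg ht0 k)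
    _ ≤ B * ∑ j ∈ range K, (t ^ N) ^ j :=
        sum_range_mul_mul_pow_le_of_block_le ha ht0 ht1.le hb K
    _ ≤ B * (1 - t ^ N)⁻¹ := by
        rw [← tsum_geometric_of_lt_one htN0 htN1]
        exact mul_le_mul_of_nonneg_left ((summable_geometric_of_lt_one htN0 htN1).sum_le_tsum _
          fun j _ => pow_nonneg htN0 j) hB

lemma summable_mul_pow_of_block_le (ha : ∀ n, 0 ≤ a n) (ht0 : 0 ≤ t) (ht1 : t < 1)
    {N : ℕ} (hN : 0 < N) {B : ℝ} (hb : ∀ m : ℕ, ∑ n ∈ Ico (m * N) ((m + 1) * N), a n ≤ B) :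
    Summable fun k => a k * t ^ k :=
  summable_of_sum_range_le (fun k => mul_nonneg (ha k) (pow_nonneg ht0 k))
    (sum_range_mul_pow_le_of_block_le ha ht0 ht1 hN hb)

lemma tsum_mul_pow_le_of_block_le (ha : ∀ n, 0 ≤ a n) (ht0 : 0 ≤ t) (ht1 : t < 1)
    {N : ℕ} (hN : 0 < N) {B : ℝ} (hb : ∀ m : ℕ, ∑ n ∈ Ico (m * N) ((m + 1) * N), a n ≤ B) :
    ∑' k, a k * t ^ k ≤ B / (1 - t ^ N) :=
  (summable_mul_pow_of_block_le ha ht0 ht1 hN hb).tsum_le_of_sum_range_le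
    (sum_range_mul_pow_le_of_block_le ha ht0 ht1 hN hb)

lemma pow_mul_sum_range_le_tsum_mul_pow (ha : ∀ n, 0 ≤ a n) (ht0 : 0 ≤ t) (ht1 : t ≤ 1)
    (hs : Summable fun k => a k * t ^ k) (n : ℕ) :
    t ^ n * ∑ k ∈ range (n + 1), a k ≤ ∑' k, a k * t ^ k :=
  calc t ^ n * ∑ k ∈ range (n + 1), a k ≤ ∑ k ∈ range (n + 1), a k * t ^ k := by
        rw [mul_sum]
        refine sum_le_sum fun k hk => ?_
        rw [mul_comm (t ^ n)]
        exact mul_le_mul_of_nonneg_left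
          (pow_le_pow_of_le_one ht0 ht1 (Nat.lt_succ_iff.1 (mem_range.1 hk))) (ha k)
    _ ≤ ∑' k, a k * t ^ k :=
        hs.sum_le_tsum _ fun k _ => mul_nonneg (ha k) (pow_nonneg ht0 k)

end BlockBound

theorem stmt_0_general (a : ℕ → ℝ) (ha : ∀ n, 0 ≤ a n)
    (h : ℕ → ℝ) (hpos : ∀ n, 0 < h n) (hlt1 : ∀ n, h n < 1)
    (hliminf : 0 < Filter.liminf (fun n => h n ^ n) Filter.atTop)
    (hlimsup : Filter.limsup (fun n => h n ^ n) Filter.atTop < 1)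
    (N₀ : ℕ) (x : ℝ) (hx : 0 < x)
    (hb : ∀ N, N₀ ≤ N → ∀ m : ℕ,
      ∑ n ∈ Finset.Ico (m * N) ((m + 1) * N), a n ≤ x * ∑ n ∈ Finset.range N, a n) :
    (∀ n, N₀ ≤ n → Summable (fun k => a k * h n ^ k)) ∧
    ∃ c₁ c₂ : ℝ, ∃ M : ℕ, 0 < c₁ ∧ c₁ < c₂ ∧ ∀ n, M ≤ n →
      c₁ * ∑ k ∈ Finset.range (n + 1), a k ≤ ∑' k, a k * h n ^ k ∧
      ∑' k, a k * h n ^ k ≤ c₂ * ∑ k ∈ Finset.range (n + 1), a k := by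
  have hsum (n : ℕ) : Summable fun k => a k * h n ^ k :=
    summable_mul_pow_of_block_le ha (hpos n).le (hlt1 n) N₀.succ_pos (hb _ N₀.le_succ)
  refine ⟨fun n _ => hsum n, ?_⟩
  have hbdd : IsBoundedUnder (· ≤ ·) atTop (fun n => h n ^ n) :=
    isBoundedUnder_of ⟨1, fun n => pow_le_one₀ (hpos n).le (hlt1 n).le⟩
  have hbdd' : IsBoundedUnder (· ≥ ·) atTop (fun n => h n ^ n) :=
    isBoundedUnder_of ⟨0, fun n => pow_nonneg (hpos n).le n⟩
  obtain ⟨c, hc0, hc⟩ := exists_between hliminf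
  obtain ⟨q, hq, hq1⟩ := exists_between hlimsup
  obtain ⟨M, hM⟩ := eventually_atTop.1
    ((eventually_lt_of_lt_liminf hc hbdd').and (eventually_lt_of_limsup_lt hq hbdd))
  refine ⟨c, c + x / (1 - q), max M N₀, hc0, lt_add_of_pos_right c (div_pos hx (sub_pos.2 hq1)), ?_⟩
  intro n hn
  obtain ⟨hcn, hqn⟩ := hM n (le_of_max_le_left hn)
  have hS : 0 ≤ ∑ k ∈ range (n + 1), a k := sum_nonneg fun k _ => ha k
  have hpow : h n ^ (n + 1) ≤ q :=
    (pow_le_pow_of_le_one (hpos n).le (hlt1 n).le n.le_succ).trans hqn.le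
  refine ⟨(mul_le_mul_of_nonneg_right hcn.le hS).trans
    (pow_mul_sum_range_le_tsum_mul_pow ha (hpos n).le (hlt1 n).le (hsum n) n), ?_⟩
  calc ∑' k, a k * h n ^ k ≤ (x * ∑ k ∈ range (n + 1), a k) / (1 - h n ^ (n + 1)) :=
        tsum_mul_pow_le_of_block_le ha (hpos n).le (hlt1 n) n.succ_pos
          (hb _ (by omega))
    _ ≤ (x * ∑ k ∈ range (n + 1), a k) / (1 - q) := by gcongr
    _ ≤ (c + x / (1 - q)) * ∑ k ∈ range (n + 1), a k := by
        rw [add_mul, div_mul_eq_mul_div]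
        exact le_add_of_nonneg_left (mul_nonneg hc0.le hS)

theorem stmt_0 (a : ℕ → ℝ) (ha : ∀ n, 0 ≤ a n)
    (h : ℕ → ℝ) (hpos : ∀ n, 0 < h n) (hlt1 : ∀ n, h n < 1) (hmono : Monotone h)
    (hliminf : 0 < Filter.liminf (fun n => h n ^ n) Filter.atTop)
    (hlimsup : Filter.limsup (fun n => h n ^ n) Filter.atTop < 1)
    (N₀ : ℕ) (x : ℝ) (hx : 0 < x)
    (hb : ∀ N, N₀ ≤ N → ∀ m : ℕ,
      ∑ n ∈ Finset.Ico (m * N) ((m + 1) * N), a n ≤ x * ∑ n ∈ Finset.range N, a n) :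
    (∀ n, N₀ ≤ n → Summable (fun k => a k * h n ^ k)) ∧
    ∃ c₁ c₂ : ℝ, ∃ M : ℕ, 0 < c₁ ∧ c₁ < c₂ ∧ ∀ n, M ≤ n →
      c₁ * ∑ k ∈ Finset.range (n + 1), a k ≤ ∑' k, a k * h n ^ k ∧
      ∑' k, a k * h n ^ k ≤ c₂ * ∑ k ∈ Finset.range (n + 1), a k :=
  stmt_0_general a ha h hpos hlt1 hliminf hlimsup N₀ x hx hb
end

section
/- Let (a_n)_{n≥0} be nonnegative reals, k ≥ 0 an integer with ∑_{n=0}^∞ a_n n^k < ∞ and ∑_{n=0}^∞ a_n n^{k+1} = ∞, let c > 0, and let w ∈ 𝒲. Define A^{(k)}(t) = ∑_{n≥k} n(n−1)⋯(n−k+1) a_n t^{n−k} for t ∈ [0,1], with A^{(k)}(1) = lim_{t↑1} A^{(k)}(t) (which is finite). Then ∑_{n=0}^∞ a_n n^k w(n) < ∞ if and only if ∑_{n=1}^∞ n·(Δw(n) − Δw(n+1))·[A^{(k)}(1) − A^{(k)}(1 − 1/(cn))] < ∞. -/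
/-!
For concave `w` with `Δw → 0`, summation by parts gives
`w n - w 0 = ∑ₘ min(n, m + 1) (Δw(m + 1) - Δw(m + 2))`, so by Tonelli `∑ aₙ nᵏ w n < ∞` iff
`∑ₘ (Δw(m + 1) - Δw(m + 2)) F(m + 1) < ∞`, where `F(x) = ∑ aₙ nᵏ min(n, x)`. On the other side
`x (A⁽ᵏ⁾(1) - A⁽ᵏ⁾(1 - 1/(cx))) = ∑ m(m-1)⋯(m-k+1) aₘ x (1 - (1 - 1/(cx))ᵐ⁻ᵏ)`, and
`x (1 - (1 - 1/(cx))ʲ)` lies between `min(x, j/c)/2` and `min(x, j/c)`. Hence for `cx ≥ 1` this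
quantity and `F(x)` are bounded by constant multiples of each other, up to an additive constant
that only costs `C ∑ (Δw(m + 1) - Δw(m + 2)) = C Δw(1)`.
-/

open Filter Topology

lemma one_sub_pow_le_min {u : ℝ} (hu1 : u ≤ 1) (j : ℕ) :
    1 - (1 - u) ^ j ≤ min 1 (j * u) := by
  have hbern := one_add_mul_le_pow (a := -u) (by linarith) j
  have hpos : 0 ≤ (1 - u) ^ j := pow_nonneg (by linarith) j
  refine le_min (by linarith) ?_
  rw [← sub_eq_add_neg] at hbern
  linarith

lemma min_div_two_le_one_sub_pow {u : ℝ} (hu0 : 0 ≤ u) (hu1 : u ≤ 1) (j : ℕ) :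
    min 1 (j * u) / 2 ≤ 1 - (1 - u) ^ j := by
  set s := (1 - u) ^ j
  have hs0 : 0 ≤ s := pow_nonneg (by linarith) j
  have hprod : s * (1 + u) ^ j ≤ 1 := by
    rw [← mul_pow]
    exact pow_le_one₀ (by nlinarith) (by nlinarith)
  have hbern : s * (1 + j * u) ≤ 1 :=
    (mul_le_mul_of_nonneg_left (one_add_mul_le_pow (by linarith) j) hs0).trans hprod
  have hju : 0 ≤ (j : ℝ) * u := by positivity
  rcases le_total ((j : ℝ) * u) 1 with h | h
  · rw [min_eq_right h]
    rcases le_total s (1 / 2) with h2 | h2 <;> nlinarith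
  · rw [min_eq_left h]
    nlinarith

lemma one_sub_one_div_mem_Icc {y : ℝ} (hy : 1 ≤ y) : 1 - 1 / y ∈ Set.Icc (0 : ℝ) 1 :=
  ⟨by rw [sub_nonneg, div_le_one (by linarith)]; exact hy,
    sub_le_self _ (by positivity)⟩

lemma mul_one_sub_pow_bounds {c x : ℝ} (hc : 0 < c) (hcx : 1 ≤ c * x) (j : ℕ) :
    x * (1 - (1 - 1 / (c * x)) ^ j) ≤ min x (j / c) ∧
      min x (j / c) / 2 ≤ x * (1 - (1 - 1 / (c * x)) ^ j) := by
  have hx : 0 < x := pos_of_mul_pos_right (one_pos.trans_le hcx) hc.le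
  have hu0 : 0 ≤ 1 / (c * x) := by positivity
  have hu1 : 1 / (c * x) ≤ 1 := by rw [div_le_one (by positivity)]; exact hcx
  have hscale : x * min 1 (j * (1 / (c * x))) = min x (j / c) := by
    rw [mul_min_of_nonneg _ _ hx.le, mul_one]
    congr 1
    field_simp
  constructor
  · rw [← hscale]
    exact mul_le_mul_of_nonneg_left (one_sub_pow_le_min hu1 j) hx.le
  · rw [← hscale, mul_div_assoc]
    exact mul_le_mul_of_nonneg_left (min_div_two_le_one_sub_pow hu0 hu1 j) hx.le

lemma pow_le_two_pow_mul_descFactorial {m k : ℕ} (hm : 2 * k ≤ m) :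
    (m : ℝ) ^ k ≤ 2 ^ k * m.descFactorial k := by
  have : m ^ k ≤ 2 ^ k * m.descFactorial k :=
    calc m ^ k ≤ (2 * (m + 1 - k)) ^ k := Nat.pow_le_pow_left (by omega) k
      _ = 2 ^ k * (m + 1 - k) ^ k := mul_pow _ _ _
      _ ≤ 2 ^ k * m.descFactorial k := Nat.mul_le_mul_left _ (Nat.pow_sub_le_descFactorial m k)
  exact_mod_cast this

section Concave

variable {w : ℕ → ℝ}

lemma sum_range_min_mul_secondDiff (n M : ℕ) :
    ∑ m ∈ Finset.range M, min (n : ℝ) (m + 1) * ((w (m + 1) - w m) - (w (m + 2) - w (m + 1))) =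
      w (min n M) - w 0 - min n M * (w (M + 1) - w M) := by
  induction M with
  | zero => simp
  | succ M ih =>
    rw [Finset.sum_range_succ, ih]
    rcases lt_or_ge M n with h | h
    · rw [min_eq_right (by exact_mod_cast h : (M : ℝ) + 1 ≤ n), Nat.min_eq_right h.le,
        Nat.min_eq_right h]
      push_cast
      ring
    · rw [min_eq_left (by exact_mod_cast h.trans M.le_succ : (n : ℝ) ≤ M + 1),
        Nat.min_eq_left h, Nat.min_eq_left (h.trans M.le_succ)]
      ring

lemma hasSum_min_mul_secondDiff (hwdec : ∀ n, w (n + 2) - w (n + 1) ≤ w (n + 1) - w n)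
    (hwlim : Tendsto (fun n => w (n + 1) - w n) atTop (𝓝 0)) (n : ℕ) :
    HasSum (fun m : ℕ => min (n : ℝ) (m + 1) * ((w (m + 1) - w m) - (w (m + 2) - w (m + 1))))
      (w n - w 0) := by
  refine (hasSum_iff_tendsto_nat_of_nonneg (fun m => mul_nonneg ?_ ?_) _).2 ?_
  · exact le_min (Nat.cast_nonneg n) (by positivity)
  · linarith [hwdec m]
  have hlim : Tendsto (fun M => w n - w 0 - n * (w (M + 1) - w M)) atTop (𝓝 (w n - w 0)) := by
    simpa using tendsto_const_nhds.sub (hwlim.const_mul (n : ℝ))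
  refine hlim.congr' ?_
  filter_upwards [eventually_ge_atTop n] with M hM
  rw [sum_range_min_mul_secondDiff, Nat.min_eq_left hM]

noncomputable def truncMoment (α : ℕ → ℝ) (x : ℝ) : ℝ := ∑' n, α n * min (n : ℝ) x

lemma summable_mul_min {α : ℕ → ℝ} (hα : ∀ n, 0 ≤ α n) (hs : Summable α) {x : ℝ} (hx : 0 ≤ x) :
    Summable (fun n => α n * min (n : ℝ) x) :=
  (hs.mul_right x).of_nonneg_of_le (fun n => mul_nonneg (hα n) (le_min n.cast_nonneg hx))
    (fun n => mul_le_mul_of_nonneg_left (min_le_right _ _) (hα n))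

lemma summable_mul_iff_summable_secondDiff_mul_truncMoment {α : ℕ → ℝ} (hα : ∀ n, 0 ≤ α n)
    (hs : Summable α) (hwdec : ∀ n, w (n + 2) - w (n + 1) ≤ w (n + 1) - w n)
    (hwlim : Tendsto (fun n => w (n + 1) - w n) atTop (𝓝 0)) :
    Summable (fun n => α n * w n) ↔
      Summable (fun m => ((w (m + 1) - w m) - (w (m + 2) - w (m + 1))) *
        truncMoment α (m + 1)) := by
  set T : ℕ × ℕ → ℝ := fun p =>
    α p.1 * (min (p.1 : ℝ) (p.2 + 1) * ((w (p.2 + 1) - w p.2) - (w (p.2 + 2) - w (p.2 + 1))))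
  have hT : 0 ≤ T := fun p => mul_nonneg (hα _) (mul_nonneg
    (le_min (Nat.cast_nonneg _) (by positivity)) (by linarith [hwdec p.2]))
  have hrow (n : ℕ) : HasSum (fun m => T (n, m)) (α n * (w n - w 0)) :=
    (hasSum_min_mul_secondDiff hwdec hwlim n).mul_left (α n)
  have hcol (m : ℕ) : HasSum (fun n => T (n, m))
      (((w (m + 1) - w m) - (w (m + 2) - w (m + 1))) * truncMoment α (m + 1)) := by
    have := ((summable_mul_min hα hs (x := (m : ℝ) + 1) (by positivity)).hasSum).mul_right
      ((w (m + 1) - w m) - (w (m + 2) - w (m + 1)))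
    rw [truncMoment, mul_comm]
    simpa only [mul_assoc] using this
  calc Summable (fun n => α n * w n) ↔ Summable (fun n => α n * (w n - w 0)) :=
        summable_iff_of_summable_sub ((hs.mul_right (w 0)).congr fun n => by ring)
    _ ↔ Summable T := by
        rw [summable_prod_of_nonneg hT]
        simp only [fun n => (hrow n).tsum_eq, fun n => (hrow n).summable, forall_const, true_and]
    _ ↔ Summable (T ∘ Prod.swap) := (Equiv.prodComm ℕ ℕ).summable_iff.symm
    _ ↔ _ := by
        rw [summable_prod_of_nonneg (f := T ∘ Prod.swap) fun p => hT p.swap]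
        simp only [Function.comp_apply, Prod.swap_prod_mk, fun m => (hcol m).tsum_eq,
          fun m => (hcol m).summable, forall_const, true_and]

end Concave

lemma summable_mul_iff_of_bounds {d f g : ℕ → ℝ} (hd : ∀ n, 0 ≤ d n) (hds : Summable d)
    {K L C : ℝ} (hgf : ∀ᶠ n in atTop, 0 ≤ g n ∧ g n ≤ K * f n)
    (hfg : ∀ᶠ n in atTop, 0 ≤ f n ∧ f n ≤ L * g n + C) :
    Summable (fun n => d n * f n) ↔ Summable (fun n => d n * g n) := by
  constructor
  · intro hf
    refine (hf.mul_left K).of_norm_bounded_eventually_nat ?_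
    filter_upwards [hgf] with n ⟨hg0, hgK⟩
    rw [Real.norm_of_nonneg (mul_nonneg (hd n) hg0)]
    nlinarith [hd n]
  · intro hg
    refine ((hg.mul_left L).add (hds.mul_left C)).of_norm_bounded_eventually_nat ?_
    filter_upwards [hfg] with n ⟨hf0, hfL⟩
    rw [Real.norm_of_nonneg (mul_nonneg (hd n) hf0)]
    nlinarith [hd n]

/-- The `k`-th derivative `A⁽ᵏ⁾(t) = ∑ m (m - 1) ⋯ (m - k + 1) aₘ tᵐ⁻ᵏ` of `A(t) = ∑ aₘ tᵐ`; the
truncated exponent `m - k` is harmless since `m.descFactorial k = 0` for `m < k`. -/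
noncomputable def derivSeries (a : ℕ → ℝ) (k : ℕ) (t : ℝ) : ℝ :=
  ∑' m : ℕ, (m.descFactorial k : ℝ) * a m * t ^ (m - k)

section DerivSeries

variable {a : ℕ → ℝ} {k : ℕ}

lemma descFactorial_mul_pow_le {m : ℕ} (ham : 0 ≤ a m) {t : ℝ} (ht0 : 0 ≤ t) (ht1 : t ≤ 1) :
    (m.descFactorial k : ℝ) * a m * t ^ (m - k) ≤ a m * (m : ℝ) ^ k := by
  have hdesc : (m.descFactorial k : ℝ) ≤ (m : ℝ) ^ k := by
    exact_mod_cast Nat.descFactorial_le_pow m k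
  calc (m.descFactorial k : ℝ) * a m * t ^ (m - k) ≤ (m : ℝ) ^ k * a m * 1 := by
        gcongr
        exact pow_le_one₀ ht0 ht1
    _ = a m * (m : ℝ) ^ k := by ring

lemma summable_descFactorial_mul_pow (ha : ∀ n, 0 ≤ a n)
    (hk : Summable (fun n => a n * (n : ℝ) ^ k)) {t : ℝ} (ht0 : 0 ≤ t) (ht1 : t ≤ 1) :
    Summable (fun m => (m.descFactorial k : ℝ) * a m * t ^ (m - k)) :=
  hk.of_nonneg_of_le (fun m => by have := ha m; positivity)
    (fun m => descFactorial_mul_pow_le (ha m) ht0 ht1)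

lemma hasSum_mul_derivSeries_sub (ha : ∀ n, 0 ≤ a n)
    (hk : Summable (fun n => a n * (n : ℝ) ^ k)) {t : ℝ} (ht0 : 0 ≤ t) (ht1 : t ≤ 1) (x : ℝ) :
    HasSum (fun m => (m.descFactorial k : ℝ) * a m * (x * (1 - t ^ (m - k))))
      (x * (derivSeries a k 1 - derivSeries a k t)) := by
  have h1 := (summable_descFactorial_mul_pow ha hk zero_le_one le_rfl).hasSum
  have ht := (summable_descFactorial_mul_pow ha hk ht0 ht1).hasSum
  refine ((h1.sub ht).mul_left x).congr_fun fun m => ?_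
  simp only [one_pow]
  ring

variable {c x : ℝ}

lemma descFactorial_mul_mul_one_sub_pow_le (hc : 0 < c) (hcx : 1 ≤ c * x) {m : ℕ}
    (ham : 0 ≤ a m) :
    (m.descFactorial k : ℝ) * a m * (x * (1 - (1 - 1 / (c * x)) ^ (m - k))) ≤
      max 1 (1 / c) * (a m * (m : ℝ) ^ k * min (m : ℝ) x) := by
  have hx : 0 < x := pos_of_mul_pos_right (one_pos.trans_le hcx) hc.le
  obtain ⟨hle, hge⟩ := mul_one_sub_pow_bounds hc hcx (m - k)
  have hφ0 : 0 ≤ x * (1 - (1 - 1 / (c * x)) ^ (m - k)) :=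
    le_trans (by positivity) hge
  have hmin : min x (((m - k : ℕ) : ℝ) / c) ≤ max 1 (1 / c) * min (m : ℝ) x := by
    rw [mul_min_of_nonneg _ _ (by positivity)]
    refine le_min ((min_le_right _ _).trans ?_) ((min_le_left _ _).trans ?_)
    · calc ((m - k : ℕ) : ℝ) / c = 1 / c * ((m - k : ℕ) : ℝ) := by ring
        _ ≤ _ := by
          gcongr
          · exact le_max_right _ _
          · exact_mod_cast Nat.sub_le m k
    · exact le_mul_of_one_le_left hx.le (le_max_left _ _)
  have hdesc : (m.descFactorial k : ℝ) ≤ (m : ℝ) ^ k := by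
    exact_mod_cast Nat.descFactorial_le_pow m k
  calc (m.descFactorial k : ℝ) * a m * (x * (1 - (1 - 1 / (c * x)) ^ (m - k)))
      ≤ (m : ℝ) ^ k * a m * (max 1 (1 / c) * min (m : ℝ) x) :=
        mul_le_mul (by gcongr) (hle.trans hmin) hφ0 (by positivity)
    _ = max 1 (1 / c) * (a m * (m : ℝ) ^ k * min (m : ℝ) x) := by ring

lemma mul_pow_mul_min_le (hc : 0 < c) (hcx : 1 ≤ c * x) {m : ℕ} (ham : 0 ≤ a m) :
    a m * (m : ℝ) ^ k * min (m : ℝ) x ≤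
      2 ^ (k + 1) * max 1 (2 * c) *
        ((m.descFactorial k : ℝ) * a m * (x * (1 - (1 - 1 / (c * x)) ^ (m - k)))) +
      2 * k * (a m * (m : ℝ) ^ k) := by
  obtain ⟨-, hge⟩ := mul_one_sub_pow_bounds hc hcx (m - k)
  have hx : 0 < x := pos_of_mul_pos_right (one_pos.trans_le hcx) hc.le
  have hφ0 : 0 ≤ x * (1 - (1 - 1 / (c * x)) ^ (m - k)) :=
    le_trans (by positivity) hge
  have hα : 0 ≤ a m * (m : ℝ) ^ k := by positivity
  rcases le_or_gt m (2 * k) with hm | hm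
  · have : min (m : ℝ) x ≤ 2 * k := (min_le_left _ _).trans (by exact_mod_cast hm)
    have : 0 ≤ 2 ^ (k + 1) * max 1 (2 * c) *
        ((m.descFactorial k : ℝ) * a m * (x * (1 - (1 - 1 / (c * x)) ^ (m - k)))) := by positivity
    nlinarith
  · have hmin : min (m : ℝ) x ≤ max 1 (2 * c) * min x (((m - k : ℕ) : ℝ) / c) := by
      rw [mul_min_of_nonneg _ _ (by positivity)]
      refine le_min ((min_le_right _ _).trans ?_) ((min_le_left _ _).trans ?_)
      · exact le_mul_of_one_le_left hx.le (le_max_left _ _)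
      · calc (m : ℝ) ≤ 2 * c * (((m - k : ℕ) : ℝ) / c) := by
              rw [mul_assoc, mul_div_cancel₀ _ hc.ne']
              exact_mod_cast (by omega : m ≤ 2 * (m - k))
          _ ≤ _ := by gcongr; exact le_max_right _ _
    have hpow := pow_le_two_pow_mul_descFactorial (m := m) (k := k) (by omega)
    calc a m * (m : ℝ) ^ k * min (m : ℝ) x
        ≤ a m * (2 ^ k * m.descFactorial k) *
            (max 1 (2 * c) * (2 * (x * (1 - (1 - 1 / (c * x)) ^ (m - k))))) := by
          gcongr
          exact hmin.trans (by gcongr; linarith)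
      _ = 2 ^ (k + 1) * max 1 (2 * c) *
            ((m.descFactorial k : ℝ) * a m * (x * (1 - (1 - 1 / (c * x)) ^ (m - k)))) := by ring
      _ ≤ _ := le_add_of_nonneg_right (by positivity)

lemma mul_derivSeries_sub_bounds (ha : ∀ n, 0 ≤ a n)
    (hk : Summable (fun n => a n * (n : ℝ) ^ k)) (hc : 0 < c) (hcx : 1 ≤ c * x) :
    0 ≤ x * (derivSeries a k 1 - derivSeries a k (1 - 1 / (c * x))) ∧
      x * (derivSeries a k 1 - derivSeries a k (1 - 1 / (c * x))) ≤
        max 1 (1 / c) * truncMoment (fun n => a n * (n : ℝ) ^ k) x := by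
  have hx : 0 < x := pos_of_mul_pos_right (one_pos.trans_le hcx) hc.le
  obtain ⟨ht0, ht1⟩ := one_sub_one_div_mem_Icc hcx
  have H := hasSum_mul_derivSeries_sub ha hk ht0 ht1 x
  refine ⟨H.nonneg fun m => ?_, hasSum_le (fun m => ?_) H
    ((summable_mul_min (fun n => ?_) hk hx.le).hasSum.mul_left _)⟩
  · have := ha m
    have := pow_le_one₀ ht0 ht1 (n := m - k)
    have : 0 ≤ 1 - (1 - 1 / (c * x)) ^ (m - k) := by linarith
    positivity
  · exact descFactorial_mul_mul_one_sub_pow_le hc hcx (ha m)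
  · have := ha n
    positivity

lemma truncMoment_bounds (ha : ∀ n, 0 ≤ a n)
    (hk : Summable (fun n => a n * (n : ℝ) ^ k)) (hc : 0 < c) (hcx : 1 ≤ c * x) :
    0 ≤ truncMoment (fun n => a n * (n : ℝ) ^ k) x ∧
      truncMoment (fun n => a n * (n : ℝ) ^ k) x ≤
        2 ^ (k + 1) * max 1 (2 * c) *
          (x * (derivSeries a k 1 - derivSeries a k (1 - 1 / (c * x)))) +
        2 * k * ∑' n, a n * (n : ℝ) ^ k := by
  have hx : 0 < x := pos_of_mul_pos_right (one_pos.trans_le hcx) hc.le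
  obtain ⟨ht0, ht1⟩ := one_sub_one_div_mem_Icc hcx
  have hF := (summable_mul_min (fun n => by have := ha n; positivity) hk hx.le).hasSum
  refine ⟨hF.nonneg fun n => ?_, hasSum_le (fun m => ?_) hF
    (((hasSum_mul_derivSeries_sub ha hk ht0 ht1 x).mul_left _).add (hk.hasSum.mul_left _))⟩
  · have := ha n
    positivity
  · exact mul_pow_mul_min_le hc hcx (ha m)

end DerivSeries

theorem stmt_1_general (a : ℕ → ℝ) (ha : ∀ n, 0 ≤ a n) (k : ℕ)
    (hk : Summable (fun n => a n * (n : ℝ) ^ k))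
    (c : ℝ) (hc : 0 < c)
    (w : ℕ → ℝ)
    (hwdec : ∀ n, w (n + 2) - w (n + 1) ≤ w (n + 1) - w n)
    (hwlim : Filter.Tendsto (fun n => w (n + 1) - w n) Filter.atTop (nhds 0)) :
    Summable (fun n => a n * (n : ℝ) ^ k * w n) ↔
    Summable (fun n : ℕ =>
      ((n : ℝ) + 1) * ((w (n + 1) - w n) - (w (n + 2) - w (n + 1))) *
        ((∑' m : ℕ, (m.descFactorial k : ℝ) * a m * (1 : ℝ) ^ (m - k)) -
          ∑' m : ℕ, (m.descFactorial k : ℝ) * a m *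
            (1 - 1 / (c * ((n : ℝ) + 1))) ^ (m - k))) := by
  have hα (n : ℕ) : 0 ≤ a n * (n : ℝ) ^ k := by have := ha n; positivity
  have hd (n : ℕ) : 0 ≤ (w (n + 1) - w n) - (w (n + 2) - w (n + 1)) := by linarith [hwdec n]
  have hds : Summable (fun n => (w (n + 1) - w n) - (w (n + 2) - w (n + 1))) :=
    (hasSum_min_mul_secondDiff hwdec hwlim 1).summable.congr fun m => by
      rw [Nat.cast_one, min_eq_left (le_add_of_nonneg_left m.cast_nonneg), one_mul]
  have hlarge : ∀ᶠ n : ℕ in atTop, 1 ≤ c * ((n : ℝ) + 1) := by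
    filter_upwards
      [((tendsto_natCast_atTop_atTop (R := ℝ)).const_mul_atTop hc).eventually_ge_atTop 1] with n hn
    nlinarith
  rw [summable_mul_iff_summable_secondDiff_mul_truncMoment hα hk hwdec hwlim]
  refine (summable_mul_iff_of_bounds hd hds
    (hlarge.mono fun n hn => mul_derivSeries_sub_bounds ha hk hc hn)
    (hlarge.mono fun n hn => truncMoment_bounds ha hk hc hn)).trans
    (summable_congr fun n => ?_)
  simp only [derivSeries]
  ring

theorem stmt_1 (a : ℕ → ℝ) (ha : ∀ n, 0 ≤ a n) (k : ℕ)
    (hk : Summable (fun n => a n * (n : ℝ) ^ k))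
    (hk1 : ¬ Summable (fun n => a n * (n : ℝ) ^ (k + 1)))
    (c : ℝ) (hc : 0 < c)
    (w : ℕ → ℝ) (hw0 : ∀ n, 0 ≤ w n) (hwmono : Monotone w)
    (hwdec : ∀ n, w (n + 2) - w (n + 1) ≤ w (n + 1) - w n)
    (hwlim : Filter.Tendsto (fun n => w (n + 1) - w n) Filter.atTop (nhds 0)) :
    Summable (fun n => a n * (n : ℝ) ^ k * w n) ↔
    Summable (fun n : ℕ =>
      ((n : ℝ) + 1) * ((w (n + 1) - w n) - (w (n + 2) - w (n + 1))) *
        ((∑' m : ℕ, (m.descFactorial k : ℝ) * a m * (1 : ℝ) ^ (m - k)) -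
          ∑' m : ℕ, (m.descFactorial k : ℝ) * a m *
            (1 - 1 / (c * ((n : ℝ) + 1))) ^ (m - k))) :=
  stmt_1_general a ha k hk c hc w hwdec hwlim
end

section
/- Let (f_n)_{n≥1} be nonnegative reals, let R > 0 with F(R) = ∑_{n≥1} f_n R^n < 1, and let (u_n)_{n≥0} be the associated renewal sequence. Then U(R) = ∑_{n≥0} u_n R^n = 1/(1 − F(R)) < ∞, and for every integer k ≥ 1: ∑_{n≥1} f_n n^k R^n < ∞ if and only if ∑_{n≥0} u_n n^k R^n < ∞. -/
/-!
With `a n = f n * R ^ n` and `b n = u n * R ^ n` the renewal equation becomes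
`b = δ₀ + a ⋆ b` (Cauchy product), so it suffices to treat `R = 1`. Summing `b ≤ c + a ⋆ b`
over a truncation of `b` gives `∑ b ≤ ∑ c / (1 - ∑ a)` whenever `∑ a < 1`.
Multiplying the renewal equation by `n ^ k = (i + m) ^ k` shows that `n ^ k b n` satisfies such an
inequality with `c` made of Cauchy products of moments of `a` and lower moments of `b`, which gives
the forward implication by induction on `k`; the converse is `a ≤ b`.
-/

open Finset

theorem summable_sum_mul_antidiagonal_of_nonneg {f g : ℕ → ℝ} (hf : Summable f)
    (hg : Summable g) (hf₀ : 0 ≤ f) (hg₀ : 0 ≤ g) :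
    Summable fun n => ∑ p ∈ antidiagonal n, f p.1 * g p.2 :=
  summable_sum_mul_antidiagonal_of_summable_mul (hf.mul_of_nonneg hg hf₀ hg₀)

theorem summable_of_le_add_sum_mul_antidiagonal {a b c : ℕ → ℝ} (ha : 0 ≤ a) (hb : 0 ≤ b)
    (hc : 0 ≤ c) (hA : Summable a) (hA₁ : ∑' n, a n < 1) (hC : Summable c)
    (h : ∀ n, b n ≤ c n + ∑ p ∈ antidiagonal n, a p.1 * b p.2) : Summable b := by
  refine summable_of_sum_range_le hb (c := (∑' n, c n) / (1 - ∑' n, a n)) fun N => ?_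
  -- Truncating `b` makes every series summable while keeping the inequality below `N`,
  -- since the convolution at `n` only sees `b` on `[0, n]`.
  set b' := (↑(range N) : Set ℕ).indicator b
  have hb' : 0 ≤ b' := Set.indicator_nonneg fun n _ => hb n
  have hB' : Summable b' := summable_of_ne_finset_zero (s := range N) fun n hn =>
    Set.indicator_of_notMem (by simpa using hn) b
  have hle : ∀ n, b' n ≤ c n + ∑ p ∈ antidiagonal n, a p.1 * b' p.2 := by
    intro n
    by_cases hn : n ∈ range N
    · calc b' n = b n := Set.indicator_of_mem (by simpa using hn) b
        _ ≤ c n + ∑ p ∈ antidiagonal n, a p.1 * b p.2 := h n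
        _ = c n + ∑ p ∈ antidiagonal n, a p.1 * b' p.2 := by
          congr 1
          refine sum_congr rfl fun p hp => ?_
          simp only [HasAntidiagonal.mem_antidiagonal, mem_range] at hp hn
          rw [show b' p.2 = b p.2 from Set.indicator_of_mem (by simp; omega) b]
    · rw [show b' n = 0 from Set.indicator_of_notMem (by simpa using hn) b]
      exact add_nonneg (hc n) (sum_nonneg fun p _ => mul_nonneg (ha _) (hb' _))
  have hsum : ∑' n, b' n ≤ ∑' n, c n + (∑' n, a n) * ∑' n, b' n := by
    rw [hA.tsum_mul_tsum_eq_tsum_sum_antidiagonal hB' (hA.mul_of_nonneg hB' ha hb'),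
      ← hC.tsum_add (summable_sum_mul_antidiagonal_of_nonneg hA hB' ha hb')]
    exact hB'.tsum_le_tsum hle
      (hC.add (summable_sum_mul_antidiagonal_of_nonneg hA hB' ha hb'))
  rw [sum_eq_tsum_indicator, le_div_iff₀ (by linarith)]
  linarith

theorem mul_mul_add_pow_eq_add_sum {R : Type*} [CommSemiring R] (x y i m : R) (k : ℕ) :
    x * y * (i + m) ^ k = x * (y * m ^ k) +
      ∑ j ∈ range k, (k.choose j : R) * (x * i ^ (k - j) * (y * m ^ j)) := by
  rw [add_comm, add_pow, sum_range_succ, mul_add, mul_sum, add_comm, Nat.choose_self,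
    Nat.sub_self]
  congr 1
  · ring
  · exact sum_congr rfl fun j _ => by ring

theorem summable_mul_pow_of_le {a : ℕ → ℝ} (ha : 0 ≤ a) (hA : Summable a) {j k : ℕ}
    (hjk : j ≤ k) (hAk : Summable fun n => a n * (n : ℝ) ^ k) :
    Summable fun n => a n * (n : ℝ) ^ j := by
  refine (hA.add hAk).of_nonneg_of_le (fun n => mul_nonneg (ha n) (by positivity)) fun n => ?_
  have hpow : (n : ℝ) ^ j ≤ 1 + (n : ℝ) ^ k := by
    rcases Nat.eq_zero_or_pos n with rfl | hn
    · rcases Nat.eq_zero_or_pos j with rfl | hj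
      · simp
      · simp [zero_pow hj.ne']; positivity
    · have := pow_le_pow_right₀ (by exact_mod_cast hn : (1 : ℝ) ≤ n) hjk
      linarith
  calc a n * (n : ℝ) ^ j ≤ a n * (1 + (n : ℝ) ^ k) := mul_le_mul_of_nonneg_left hpow (ha n)
    _ = a n + a n * (n : ℝ) ^ k := by ring

section Renewal

variable {a b : ℕ → ℝ}

theorem renewal_nonneg (ha : 0 ≤ a) (hb₀ : b 0 = 1)
    (hren : ∀ n, 1 ≤ n → b n = ∑ k ∈ Icc 1 n, a k * b (n - k)) : 0 ≤ b := by
  intro n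
  induction n using Nat.strong_induction_on with
  | _ n ih =>
    rcases Nat.eq_zero_or_pos n with rfl | hn
    · simp [hb₀]
    · rw [hren n hn]
      exact sum_nonneg fun k hk => mul_nonneg (ha k) (ih _ (by simp at hk; omega))

theorem renewal_eq_ite_add_sum_antidiagonal (ha₀ : a 0 = 0) (hb₀ : b 0 = 1)
    (hren : ∀ n, 1 ≤ n → b n = ∑ k ∈ Icc 1 n, a k * b (n - k)) (n : ℕ) :
    b n = (if n = 0 then 1 else 0) + ∑ p ∈ antidiagonal n, a p.1 * b p.2 := by
  rw [Nat.sum_antidiagonal_eq_sum_range_succ (fun i j => a i * b j), sum_range_succ', ha₀,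
    zero_mul, add_zero]
  rcases Nat.eq_zero_or_pos n with rfl | hn
  · simp [hb₀]
  · rw [if_neg hn.ne', zero_add, hren n hn, ← Ico_add_one_right_eq_Icc, sum_Ico_eq_sum_range]
    exact sum_congr (by simp) fun k _ => by rw [add_comm 1 k]

theorem renewal_mul_pow
    (hren : ∀ n, b n = (if n = 0 then 1 else 0) + ∑ p ∈ antidiagonal n, a p.1 * b p.2)
    (R : ℝ) (n : ℕ) :
    b n * R ^ n = (if n = 0 then 1 else 0) +
      ∑ p ∈ antidiagonal n, a p.1 * R ^ p.1 * (b p.2 * R ^ p.2) := by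
  rw [hren n, add_mul, sum_mul]
  congr 1
  · split_ifs with hn <;> simp [hn]
  · refine sum_congr rfl fun p hp => ?_
    rw [← (HasAntidiagonal.mem_antidiagonal.mp hp), pow_add]
    ring

theorem le_renewal (ha : 0 ≤ a) (hb : 0 ≤ b) (hb₀ : b 0 = 1)
    (hren : ∀ n, b n = (if n = 0 then 1 else 0) + ∑ p ∈ antidiagonal n, a p.1 * b p.2) :
    a ≤ b := by
  intro n
  calc a n = a (n, 0).1 * b (n, 0).2 := by rw [show b (n, 0).2 = 1 from hb₀, mul_one]
    _ ≤ ∑ p ∈ antidiagonal n, a p.1 * b p.2 :=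
      single_le_sum (f := fun p => a p.1 * b p.2) (fun p _ => mul_nonneg (ha _) (hb _))
        (HasAntidiagonal.mem_antidiagonal.mpr (add_zero n))
    _ ≤ b n := by
      rw [hren n, le_add_iff_nonneg_left]
      split_ifs <;> norm_num

theorem summable_renewal_moment (ha : 0 ≤ a) (hb : 0 ≤ b)
    (hren : ∀ n, b n = (if n = 0 then 1 else 0) + ∑ p ∈ antidiagonal n, a p.1 * b p.2)
    (hA : Summable a) (hA₁ : ∑' n, a n < 1) {k : ℕ}
    (hAk : Summable fun n => a n * (n : ℝ) ^ k)
    (hB : ∀ j < k, Summable fun n => b n * (n : ℝ) ^ j) :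
    Summable fun n => b n * (n : ℝ) ^ k := by
  have hmom {c : ℕ → ℝ} (hc : 0 ≤ c) (j : ℕ) : 0 ≤ fun n => c n * (n : ℝ) ^ j :=
    fun n => mul_nonneg (hc n) (by positivity)
  -- Expanding `n ^ k = (i + m) ^ k` in the renewal equation leaves `m ^ k` against `b m`,
  -- plus mixed terms built from strictly lower moments of `b`.
  refine summable_of_le_add_sum_mul_antidiagonal ha (hmom hb k)
    (c := fun n => (if n = 0 then 1 else 0) + ∑ j ∈ range k, (k.choose j : ℝ) *
      ∑ p ∈ antidiagonal n, (a p.1 * (p.1 : ℝ) ^ (k - j)) * (b p.2 * (p.2 : ℝ) ^ j))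
    (fun n => ?_) hA hA₁ ?_ fun n => ?_
  · refine add_nonneg (by split_ifs <;> norm_num) (sum_nonneg fun j _ => ?_)
    exact mul_nonneg (by positivity)
      (sum_nonneg fun p _ => mul_nonneg (hmom ha _ _) (hmom hb _ _))
  · refine (hasSum_ite_eq 0 (1 : ℝ)).summable.add (summable_sum fun j hj => ?_)
    exact (summable_sum_mul_antidiagonal_of_nonneg
      (summable_mul_pow_of_le ha hA (Nat.sub_le k j) hAk) (hB j (mem_range.mp hj)) (hmom ha _)
      (hmom hb _)).mul_left _
  · have hterm : ∀ p ∈ antidiagonal n, a p.1 * b p.2 * (n : ℝ) ^ k =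
        a p.1 * (b p.2 * (p.2 : ℝ) ^ k) + ∑ j ∈ range k, (k.choose j : ℝ) *
          ((a p.1 * (p.1 : ℝ) ^ (k - j)) * (b p.2 * (p.2 : ℝ) ^ j)) := fun p hp => by
      rw [← HasAntidiagonal.mem_antidiagonal.mp hp, Nat.cast_add, mul_mul_add_pow_eq_add_sum]
    rw [hren n, add_mul, sum_mul, sum_congr rfl hterm, sum_add_distrib, sum_comm, add_assoc,
      add_comm (∑ p ∈ antidiagonal n, _)]
    simp_rw [mul_sum]
    gcongr
    split_ifs with hn
    · simp [hn, pow_le_one₀]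
    · simp

theorem summable_mul_pow_iff_renewal (ha : 0 ≤ a) (hb : 0 ≤ b) (hb₀ : b 0 = 1)
    (hren : ∀ n, b n = (if n = 0 then 1 else 0) + ∑ p ∈ antidiagonal n, a p.1 * b p.2)
    (hA : Summable a) (hA₁ : ∑' n, a n < 1) (k : ℕ) :
    (Summable fun n => a n * (n : ℝ) ^ k) ↔ Summable fun n => b n * (n : ℝ) ^ k := by
  refine ⟨fun hAk => ?_, fun hBk => hBk.of_nonneg_of_le
    (fun n => mul_nonneg (ha n) (by positivity))
    fun n => mul_le_mul_of_nonneg_right (le_renewal ha hb hb₀ hren n) (by positivity)⟩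
  induction k using Nat.strong_induction_on with
  | _ k ih =>
    exact summable_renewal_moment ha hb hren hA hA₁ hAk fun j hj =>
      ih j hj (summable_mul_pow_of_le ha hA hj.le hAk)

theorem tsum_renewal (ha : 0 ≤ a) (hb : 0 ≤ b)
    (hren : ∀ n, b n = (if n = 0 then 1 else 0) + ∑ p ∈ antidiagonal n, a p.1 * b p.2)
    (hA : Summable a) (hA₁ : ∑' n, a n < 1) (hB : Summable b) :
    ∑' n, b n = 1 / (1 - ∑' n, a n) := by
  have hrec : ∑' n, b n = 1 + (∑' n, a n) * ∑' n, b n := by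
    conv_lhs => rw [tsum_congr hren]
    rw [(hasSum_ite_eq 0 (1 : ℝ)).summable.tsum_add
      (summable_sum_mul_antidiagonal_of_nonneg hA hB ha hb), tsum_ite_eq,
      hA.tsum_mul_tsum_eq_tsum_sum_antidiagonal hB (hA.mul_of_nonneg hB ha hb)]
  rw [eq_div_iff (by linarith)]
  linarith

end Renewal

theorem stmt_2 (f : ℕ → ℝ) (hf : ∀ n, 0 ≤ f n) (hf0 : f 0 = 0)
    (R : ℝ) (hR : 0 < R)
    (hFs : Summable (fun n => f n * R ^ n)) (hFR : ∑' n, f n * R ^ n < 1)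
    (u : ℕ → ℝ) (hu0 : u 0 = 1)
    (hun : ∀ n, 1 ≤ n → u n = ∑ k ∈ Finset.Icc 1 n, f k * u (n - k)) :
    (Summable (fun n => u n * R ^ n) ∧
      ∑' n, u n * R ^ n = 1 / (1 - ∑' n, f n * R ^ n)) ∧
    ∀ k : ℕ, 1 ≤ k →
      (Summable (fun n => f n * (n : ℝ) ^ k * R ^ n) ↔
        Summable (fun n => u n * (n : ℝ) ^ k * R ^ n)) := by
  set a : ℕ → ℝ := fun n => f n * R ^ n
  set b : ℕ → ℝ := fun n => u n * R ^ n
  have ha : 0 ≤ a := fun n => mul_nonneg (hf n) (pow_nonneg hR.le n)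
  have hb : 0 ≤ b := fun n => mul_nonneg (renewal_nonneg hf hu0 hun n) (pow_nonneg hR.le n)
  have hb₀ : b 0 = 1 := by simp [b, hu0]
  have hren := renewal_mul_pow (renewal_eq_ite_add_sum_antidiagonal hf0 hu0 hun) R
  have hB : Summable b := by
    simpa using (summable_mul_pow_iff_renewal ha hb hb₀ hren hFs hFR 0).mp (by simpa using hFs)
  refine ⟨⟨hB, tsum_renewal ha hb hren hFs hFR hB⟩, fun k _ => ?_⟩
  have hmoment (v : ℕ → ℝ) :
      (fun n => v n * (n : ℝ) ^ k * R ^ n) = fun n => v n * R ^ n * (n : ℝ) ^ k :=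
    funext fun n => by ring
  rw [hmoment, hmoment]
  exact summable_mul_pow_iff_renewal ha hb hb₀ hren hFs hFR k
end

section
/- Let (a_n)_{n≥0} be a sequence of nonnegative reals with a_0 > 0, a_0 + a_1 < 1, ∑_{n=0}^∞ a_n = 1, and ∑_{n=1}^∞ n a_n = 1. Define ψ(h) = G(1−h) − (1−h) for h ∈ [0,1], where G(t) = ∑_{n=0}^∞ a_n t^n. Then ψ is continuous and strictly increasing on [0,1] with ψ(0) = 0 and ψ(1) = a_0, ψ(x+y) ≥ ψ(x) + ψ(y) whenever x, y ≥ 0 and x + y ≤ 1, and ψ(nx) ≤ n²ψ(x) for every positive integer n and every x ∈ [0, 1/n]; that is, ψ ∈ ℋ'. -/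
/-! Since `∑ aₙ = ∑ n aₙ = 1`, we have `ψ(h) = ∑ aₙ Dₙ(h)` with the Bernoulli defect
`Dₙ(h) = (1 - h)ⁿ - 1 + n h`. Summing geometric series twice gives
`Dₙ(h) = h · ∑_{k<n} (1 - (1 - h)ᵏ) = h² · ∑_{k<n} ∑_{j<k} (1 - h)ʲ`.
On `[0, 1]` the defect is thus `h` times a nondecreasing nonnegative function, which makes it
superadditive, and `h²` times a nonincreasing one, which gives `Dₙ(m x) ≤ m² Dₙ(x)`. Both
properties pass to the nonnegative combination `ψ`. Strict monotonicity comes from a single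
term `aₙ Dₙ` with `n ≥ 2` and `aₙ > 0`, which exists because `a₀ + a₁ < 1`. -/

open Finset Set

noncomputable def bernoulliDefect (n : ℕ) (h : ℝ) : ℝ := (1 - h) ^ n - 1 + n * h

namespace bernoulliDefect

lemma eq_mul_sum (n : ℕ) (h : ℝ) :
    bernoulliDefect n h = h * ∑ k ∈ range n, (1 - (1 - h) ^ k) := by
  rw [bernoulliDefect, sum_sub_distrib, sum_const, card_range, nsmul_eq_mul, mul_one]
  linear_combination -geom_sum_mul (1 - h) n

lemma eq_sq_mul_sum (n : ℕ) (h : ℝ) :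
    bernoulliDefect n h = h ^ 2 * ∑ k ∈ range n, ∑ j ∈ range k, (1 - h) ^ j := by
  have hk : ∀ k, 1 - (1 - h) ^ k = h * ∑ j ∈ range k, (1 - h) ^ j := fun k => by
    linear_combination geom_sum_mul (1 - h) k
  rw [eq_mul_sum, sum_congr rfl fun k _ => hk k, ← mul_sum]
  ring

lemma monotoneOn_sum_one_sub_pow (n : ℕ) :
    MonotoneOn (fun h : ℝ => ∑ k ∈ range n, (1 - (1 - h) ^ k)) (Icc 0 1) :=
  fun x hx y hy hxy => sum_le_sum fun k _ => by
    have : (1 - y) ^ k ≤ (1 - x) ^ k := pow_le_pow_left₀ (by linarith [hy.2]) (by linarith) k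
    linarith

lemma sum_one_sub_pow_nonneg (n : ℕ) {h : ℝ} (hh : h ∈ Icc (0 : ℝ) 1) :
    0 ≤ ∑ k ∈ range n, (1 - (1 - h) ^ k) := by
  simpa using monotoneOn_sum_one_sub_pow n ⟨le_rfl, zero_le_one⟩ hh hh.1

lemma monotoneOn (n : ℕ) : MonotoneOn (bernoulliDefect n) (Icc 0 1) := by
  have h := monotoneOn_id.mul (monotoneOn_sum_one_sub_pow n) (fun x hx => hx.1)
    (fun x hx => sum_one_sub_pow_nonneg n hx)
  exact h.congr fun x _ => (eq_mul_sum n x).symm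

lemma strictMonoOn {n : ℕ} (hn : 2 ≤ n) : StrictMonoOn (bernoulliDefect n) (Icc 0 1) := by
  intro x hx y hy hxy
  have hterm : ∀ k, 0 ≤ 1 - (1 - y) ^ k := fun k =>
    sub_nonneg.mpr (pow_le_one₀ (by linarith [hy.2]) (by linarith [hy.1]))
  have hpos : 0 < ∑ k ∈ range n, (1 - (1 - y) ^ k) := by
    have h1 := single_le_sum (fun k _ => hterm k) (mem_range.mpr (by omega : 1 < n))
    simp only [pow_one] at h1
    linarith [hx.1]
  rw [eq_mul_sum, eq_mul_sum]
  calc x * ∑ k ∈ range n, (1 - (1 - x) ^ k)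
      ≤ x * ∑ k ∈ range n, (1 - (1 - y) ^ k) :=
        mul_le_mul_of_nonneg_left (monotoneOn_sum_one_sub_pow n hx hy hxy.le) hx.1
    _ < y * ∑ k ∈ range n, (1 - (1 - y) ^ k) := mul_lt_mul_of_pos_right hxy hpos

lemma add_le (n : ℕ) {x y : ℝ} (hx : 0 ≤ x) (hy : 0 ≤ y) (hxy : x + y ≤ 1) :
    bernoulliDefect n x + bernoulliDefect n y ≤ bernoulliDefect n (x + y) := by
  have hI : x + y ∈ Icc (0 : ℝ) 1 := ⟨by linarith, hxy⟩
  have hx' := monotoneOn_sum_one_sub_pow n ⟨hx, by linarith⟩ hI (by linarith : x ≤ x + y)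
  have hy' := monotoneOn_sum_one_sub_pow n ⟨hy, by linarith⟩ hI (by linarith : y ≤ x + y)
  simp only at hx' hy'
  rw [eq_mul_sum, eq_mul_sum, eq_mul_sum, add_mul]
  exact add_le_add (mul_le_mul_of_nonneg_left hx' hx) (mul_le_mul_of_nonneg_left hy' hy)

lemma mul_le {c x : ℝ} (n : ℕ) (hc : 1 ≤ c) (hx : 0 ≤ x) (hcx : c * x ≤ 1) :
    bernoulliDefect n (c * x) ≤ c ^ 2 * bernoulliDefect n x := by
  have hsum : ∑ k ∈ range n, ∑ j ∈ range k, (1 - c * x) ^ j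
      ≤ ∑ k ∈ range n, ∑ j ∈ range k, (1 - x) ^ j :=
    sum_le_sum fun k _ => sum_le_sum fun j _ =>
      pow_le_pow_left₀ (by linarith) (by nlinarith) j
  rw [eq_sq_mul_sum, eq_sq_mul_sum, mul_pow, mul_assoc]
  exact mul_le_mul_of_nonneg_left (mul_le_mul_of_nonneg_left hsum (sq_nonneg x)) (sq_nonneg c)

end bernoulliDefect

lemma hasSum_mul_bernoulliDefect {a : ℕ → ℝ} {G m μ : ℝ} (h : ℝ)
    (hG : HasSum (fun n => a n * (1 - h) ^ n) G) (hm : HasSum a m)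
    (hμ : HasSum (fun n : ℕ => (n : ℝ) * a n) μ) :
    HasSum (fun n => a n * bernoulliDefect n h) (G - m + μ * h) := by
  convert hG.add ((hμ.mul_right h).sub hm) using 1
  · ext n
    rw [bernoulliDefect]
    ring
  · ring

lemma norm_mul_one_sub_pow_le {a h : ℝ} (ha : 0 ≤ a) (hh : h ∈ Icc (0 : ℝ) 1) (n : ℕ) :
    ‖a * (1 - h) ^ n‖ ≤ a := by
  rw [norm_mul, Real.norm_of_nonneg ha, norm_pow, Real.norm_of_nonneg (by linarith [hh.2])]
  exact mul_le_of_le_one_right ha (pow_le_one₀ (by linarith [hh.2]) (by linarith [hh.1]))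

lemma continuousOn_tsum_mul_one_sub_pow {a : ℕ → ℝ} (ha : ∀ n, 0 ≤ a n)
    (hsa : Summable a) :
    ContinuousOn (fun h : ℝ => ∑' n, a n * (1 - h) ^ n) (Icc 0 1) :=
  continuousOn_tsum (fun n => by fun_prop) hsa
    fun n _ hh => norm_mul_one_sub_pow_le (ha n) hh n

lemma summable_of_tsum_eq_one {f : ℕ → ℝ} (hf : ∑' n, f n = 1) : Summable f := by
  by_contra hc
  simp [tsum_eq_zero_of_not_summable hc] at hf

lemma hasSum_mul_bernoulliDefect_of_mem_Icc {a : ℕ → ℝ} (ha : ∀ n, 0 ≤ a n)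
    (hsum : ∑' n, a n = 1) (hμ : ∑' n : ℕ, (n : ℝ) * a n = 1) {h : ℝ}
    (hh : h ∈ Icc (0 : ℝ) 1) :
    HasSum (fun n => a n * bernoulliDefect n h) ((∑' n, a n * (1 - h) ^ n) - (1 - h)) := by
  have hsa := summable_of_tsum_eq_one hsum
  convert hasSum_mul_bernoulliDefect h
    (hsa.of_norm_bounded fun n => norm_mul_one_sub_pow_le (ha n) hh n).hasSum
    (hsa.hasSum_iff.mpr hsum) ((summable_of_tsum_eq_one hμ).hasSum_iff.mpr hμ) using 1
  ring

lemma strictMonoOn_tsum_mul {α : Type*} [Preorder α] {s : Set α} {a : ℕ → ℝ}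
    {f : ℕ → α → ℝ} {N : ℕ} (ha : ∀ n, 0 ≤ a n)
    (hs : ∀ x ∈ s, Summable fun n => a n * f n x)
    (hf : ∀ n, MonotoneOn (f n) s) (haN : 0 < a N) (hfN : StrictMonoOn (f N) s) :
    StrictMonoOn (fun x => ∑' n, a n * f n x) s := fun x hx y hy hxy =>
  Summable.tsum_lt_tsum (i := N)
    (fun n => mul_le_mul_of_nonneg_left (hf n hx hy hxy.le) (ha n))
    (mul_lt_mul_of_pos_left (hfN hx hy hxy) haN) (hs x hx) (hs y hy)

lemma tsum_mul_bernoulliDefect_add_le {a : ℕ → ℝ} (ha : ∀ n, 0 ≤ a n)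
    (hs : ∀ h ∈ Icc (0 : ℝ) 1, Summable fun n => a n * bernoulliDefect n h)
    {x y : ℝ} (hx : 0 ≤ x) (hy : 0 ≤ y) (hxy : x + y ≤ 1) :
    ∑' n, a n * bernoulliDefect n x + ∑' n, a n * bernoulliDefect n y ≤
      ∑' n, a n * bernoulliDefect n (x + y) := by
  have hsx := hs x ⟨hx, by linarith⟩
  have hsy := hs y ⟨hy, by linarith⟩
  rw [← hsx.tsum_add hsy]
  refine Summable.tsum_le_tsum (fun n => ?_) (hsx.add hsy) (hs _ ⟨by linarith, hxy⟩)
  rw [← mul_add]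
  exact mul_le_mul_of_nonneg_left (bernoulliDefect.add_le n hx hy hxy) (ha n)

lemma tsum_mul_bernoulliDefect_mul_le {a : ℕ → ℝ} (ha : ∀ n, 0 ≤ a n)
    (hs : ∀ h ∈ Icc (0 : ℝ) 1, Summable fun n => a n * bernoulliDefect n h)
    {c x : ℝ} (hc : 1 ≤ c) (hx : 0 ≤ x) (hcx : c * x ≤ 1) :
    ∑' n, a n * bernoulliDefect n (c * x) ≤ c ^ 2 * ∑' n, a n * bernoulliDefect n x := by
  rw [← tsum_mul_left]
  refine Summable.tsum_le_tsum (fun n => ?_) (hs _ ⟨by positivity, hcx⟩)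
    ((hs x ⟨hx, by nlinarith⟩).mul_left _)
  rw [mul_left_comm]
  exact mul_le_mul_of_nonneg_left (bernoulliDefect.mul_le n hc hx hcx) (ha n)

lemma exists_two_le_pos {a : ℕ → ℝ} (ha : ∀ n, 0 ≤ a n) (hsum : ∑' n, a n = 1)
    (ha01 : a 0 + a 1 < 1) : ∃ N, 2 ≤ N ∧ 0 < a N := by
  by_contra! hc
  have : ∑' n, a n = ∑ n ∈ range 2, a n :=
    tsum_eq_sum fun n hn => le_antisymm (hc n (by simp at hn; omega)) (ha n)
  simp only [hsum, sum_range_succ, sum_range_zero, zero_add] at this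
  linarith

theorem stmt_5_general (a : ℕ → ℝ) (ha : ∀ n, 0 ≤ a n)
    (ha01 : a 0 + a 1 < 1)
    (hsum : ∑' n, a n = 1) (hμ : ∑' n : ℕ, (n : ℝ) * a n = 1) :
    ContinuousOn (fun h : ℝ => (∑' n : ℕ, a n * (1 - h) ^ n) - (1 - h)) (Set.Icc 0 1) ∧
    StrictMonoOn (fun h : ℝ => (∑' n : ℕ, a n * (1 - h) ^ n) - (1 - h)) (Set.Icc 0 1) ∧
    ((∑' n : ℕ, a n * (1 - (0:ℝ)) ^ n) - (1 - (0:ℝ)) = 0) ∧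
    ((∑' n : ℕ, a n * (1 - (1:ℝ)) ^ n) - (1 - (1:ℝ)) = a 0) ∧
    (∀ x y : ℝ, 0 ≤ x → 0 ≤ y → x + y ≤ 1 →
      ((∑' n : ℕ, a n * (1 - x) ^ n) - (1 - x)) +
        ((∑' n : ℕ, a n * (1 - y) ^ n) - (1 - y)) ≤
      (∑' n : ℕ, a n * (1 - (x + y)) ^ n) - (1 - (x + y))) ∧
    (∀ m : ℕ, 0 < m → ∀ x : ℝ, 0 ≤ x → x ≤ 1 / m →
      (∑' n : ℕ, a n * (1 - (m * x)) ^ n) - (1 - (m * x)) ≤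
        (m : ℝ) ^ 2 * ((∑' n : ℕ, a n * (1 - x) ^ n) - (1 - x))) := by
  have hψ : ∀ h ∈ Icc (0 : ℝ) 1,
      (∑' n : ℕ, a n * (1 - h) ^ n) - (1 - h) = ∑' n, a n * bernoulliDefect n h :=
    fun h hh => (hasSum_mul_bernoulliDefect_of_mem_Icc ha hsum hμ hh).tsum_eq.symm
  have hs : ∀ h ∈ Icc (0 : ℝ) 1, Summable fun n => a n * bernoulliDefect n h :=
    fun h hh => (hasSum_mul_bernoulliDefect_of_mem_Icc ha hsum hμ hh).summable
  obtain ⟨N, hN, haN⟩ := exists_two_le_pos ha hsum ha01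
  refine ⟨?_, ?_, by simp [hsum], ?_, ?_, ?_⟩
  · exact (continuousOn_tsum_mul_one_sub_pow ha (summable_of_tsum_eq_one hsum)).sub
      (by fun_prop)
  · exact (strictMonoOn_tsum_mul ha hs bernoulliDefect.monotoneOn haN
      (bernoulliDefect.strictMonoOn hN)).congr fun h hh => (hψ h hh).symm
  · rw [sub_self, tsum_eq_single 0 fun n hn => by simp [zero_pow hn]]
    simp
  · intro x y hx hy hxy
    rw [hψ x ⟨hx, by linarith⟩, hψ y ⟨hy, by linarith⟩, hψ _ ⟨by linarith, hxy⟩]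
    exact tsum_mul_bernoulliDefect_add_le ha hs hx hy hxy
  · intro m hm x hx hxm
    have hm1 : (1 : ℝ) ≤ m := by exact_mod_cast hm
    have hmx : (m : ℝ) * x ≤ 1 := by rwa [le_div_iff₀ (by positivity), mul_comm] at hxm
    rw [hψ x ⟨hx, by nlinarith⟩, hψ _ ⟨by positivity, hmx⟩]
    exact tsum_mul_bernoulliDefect_mul_le ha hs hm1 hx hmx

theorem stmt_5 (a : ℕ → ℝ) (ha : ∀ n, 0 ≤ a n) (ha0 : 0 < a 0)
    (ha01 : a 0 + a 1 < 1)
    (hsum : ∑' n, a n = 1) (hμ : ∑' n : ℕ, (n : ℝ) * a n = 1) :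
    ContinuousOn (fun h : ℝ => (∑' n : ℕ, a n * (1 - h) ^ n) - (1 - h)) (Set.Icc 0 1) ∧
    StrictMonoOn (fun h : ℝ => (∑' n : ℕ, a n * (1 - h) ^ n) - (1 - h)) (Set.Icc 0 1) ∧
    ((∑' n : ℕ, a n * (1 - (0:ℝ)) ^ n) - (1 - (0:ℝ)) = 0) ∧
    ((∑' n : ℕ, a n * (1 - (1:ℝ)) ^ n) - (1 - (1:ℝ)) = a 0) ∧
    (∀ x y : ℝ, 0 ≤ x → 0 ≤ y → x + y ≤ 1 →
      ((∑' n : ℕ, a n * (1 - x) ^ n) - (1 - x)) +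
        ((∑' n : ℕ, a n * (1 - y) ^ n) - (1 - y)) ≤
      (∑' n : ℕ, a n * (1 - (x + y)) ^ n) - (1 - (x + y))) ∧
    (∀ m : ℕ, 0 < m → ∀ x : ℝ, 0 ≤ x → x ≤ 1 / m →
      (∑' n : ℕ, a n * (1 - (m * x)) ^ n) - (1 - (m * x)) ≤
        (m : ℝ) ^ 2 * ((∑' n : ℕ, a n * (1 - x) ^ n) - (1 - x))) :=
  stmt_5_general a ha ha01 hsum hμ
end

section
/- Let (a_n)_{n≥0} be nonnegative reals with a_0 > 0, a_0 + a_1 < 1, ∑_{n=0}^∞ a_n = 1 and ∑_{n=1}^∞ n a_n = 1, and let G(t) = ∑_{n=0}^∞ a_n t^n. Let F : (0,1) → (0,1) satisfy F(t) = t·G(F(t)) for all t ∈ (0,1) and lim_{t→1−} F(t) = 1. Then 1 − F(t) ∼ ψ^{−1}(1−t) as t → 1−: there exist constants 0 < c₁ < c₂ and t₀ ∈ (0,1) such that c₁·ψ^{−1}(1−t) ≤ 1 − F(t) ≤ c₂·ψ^{−1}(1−t) for all t ∈ (t₀, 1). -/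
/-!
With `G u = ∑ aₙ uⁿ` and `ψ x = G (1 - x) - (1 - x)`, the functional equation gives
`ψ (1 - F t) = F t (1 - t) / t`, which lies between `(1 - t) / 2` and `2 (1 - t) = 2 ψ (g (1 - t))`
once `t` and `F t` are at least `1/2`. Convexity of `G` on `[0, 1]` together with `G 1 = 1` makes `ψ`
star-shaped at `0` (`ψ (c x) ≤ c ψ x`), i.e. `ψ x / x` is nondecreasing, and a function with
nondecreasing slope from the origin turns values comparable up to a factor `2` into arguments
comparable up to the same factor.
-/

open Set Filter Topology

theorem le_mul_of_apply_le_mul_apply {f : ℝ → ℝ}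
    (hf : ∀ c x, 0 ≤ c → c ≤ 1 → 0 ≤ x → x ≤ 1 → f (c * x) ≤ c * f x)
    {x y C : ℝ} (hy : 0 ≤ y) (hx : x ≤ 1) (hC : 1 ≤ C) (hfy : 0 < f y)
    (hfxy : f x ≤ C * f y) : x ≤ C * y := by
  rcases le_or_gt x y with hxy | hyx
  · nlinarith
  have hx0 : 0 < x := hy.trans_lt hyx
  have hstar : f y ≤ y / x * f x := by
    simpa [div_mul_cancel₀ y hx0.ne'] using
      hf (y / x) x (div_nonneg hy hx0.le) ((div_le_one hx0).2 hyx.le) hx0.le hx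
  have : x * f y ≤ C * y * f y := by
    calc x * f y ≤ y * f x := by rwa [div_mul_eq_mul_div, le_div_iff₀' hx0] at hstar
      _ ≤ y * (C * f y) := mul_le_mul_of_nonneg_left hfxy hy
      _ = C * y * f y := by ring
  exact le_of_mul_le_mul_right this hfy

section PowerSeries

variable {a : ℕ → ℝ}

theorem summable_mul_pow_of_mem_Icc (ha : ∀ n, 0 ≤ a n) (hsa : Summable a) {u : ℝ}
    (hu : u ∈ Icc (0 : ℝ) 1) : Summable fun n => a n * u ^ n :=
  Summable.of_nonneg_of_le (fun n => mul_nonneg (ha n) (pow_nonneg hu.1 n))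
    (fun n => mul_le_of_le_one_right (ha n) (pow_le_one₀ hu.1 hu.2)) hsa

theorem convexOn_tsum_mul_pow (ha : ∀ n, 0 ≤ a n) (hsa : Summable a) :
    ConvexOn ℝ (Icc 0 1) fun u => ∑' n, a n * u ^ n := by
  refine ⟨convex_Icc 0 1, fun u hu v hv p q hp hq hpq => ?_⟩
  have hmem : p • u + q • v ∈ Icc (0 : ℝ) 1 := convex_Icc 0 1 hu hv hp hq hpq
  have hsu := summable_mul_pow_of_mem_Icc ha hsa hu
  have hsv := summable_mul_pow_of_mem_Icc ha hsa hv
  simp only [smul_eq_mul] at hmem ⊢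
  rw [← tsum_mul_left, ← tsum_mul_left, ← Summable.tsum_add (hsu.mul_left p) (hsv.mul_left q)]
  refine Summable.tsum_le_tsum (fun n => ?_) (summable_mul_pow_of_mem_Icc ha hsa hmem)
    ((hsu.mul_left p).add (hsv.mul_left q))
  have hpow := (convexOn_pow n).2 (mem_Ici.2 hu.1) (mem_Ici.2 hv.1) hp hq hpq
  simp only [smul_eq_mul] at hpow
  nlinarith [mul_le_mul_of_nonneg_left hpow (ha n)]

/-- `ψ` of the informal statement: `ψ x = G (1 - x) - (1 - x)` with `G u = ∑ aₙ uⁿ`. -/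
noncomputable def psi (a : ℕ → ℝ) (x : ℝ) : ℝ :=
  (∑' n, a n * (1 - x) ^ n) - (1 - x)

/-- Convexity of `G` between `1 - x` and `1`, where `G 1 = 1`. -/
theorem psi_mul_le (ha : ∀ n, 0 ≤ a n) (hsum : ∑' n, a n = 1) {c x : ℝ}
    (hc₀ : 0 ≤ c) (hc₁ : c ≤ 1) (hx₀ : 0 ≤ x) (hx₁ : x ≤ 1) :
    psi a (c * x) ≤ c * psi a x := by
  have hsa : Summable a := by
    by_contra h
    simp [tsum_eq_zero_of_not_summable h] at hsum
  have hconv := (convexOn_tsum_mul_pow ha hsa).2 (x := 1 - x) (y := 1)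
    ⟨by linarith, by linarith⟩ ⟨zero_le_one, le_rfl⟩ hc₀ (sub_nonneg.2 hc₁) (by ring)
  simp only [smul_eq_mul, one_pow, mul_one, hsum] at hconv
  unfold psi
  rw [show 1 - c * x = c * (1 - x) + (1 - c) by ring]
  linarith

theorem psi_one_sub_of_eq_mul_tsum {t y : ℝ} (ht : t ≠ 0) (hy : y = t * ∑' n, a n * y ^ n) :
    psi a (1 - y) = y * (1 - t) / t := by
  have hG : ∑' n, a n * y ^ n = y / t := by rw [eq_div_iff ht, mul_comm, ← hy]
  rw [psi, sub_sub_cancel, hG]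
  field_simp

end PowerSeries

theorem stmt_9_general (a : ℕ → ℝ) (ha : ∀ n, 0 ≤ a n) (ha0 : 0 < a 0)
    (hsum : ∑' n, a n = 1)
    (F : ℝ → ℝ)
    (hF : ∀ t : ℝ, 0 < t → t < 1 → 0 < F t ∧ F t < 1)
    (hFeq : ∀ t : ℝ, 0 < t → t < 1 → F t = t * ∑' n : ℕ, a n * F t ^ n)
    (hFlim : Filter.Tendsto F (nhdsWithin 1 (Set.Iio 1)) (nhds 1))
    (g : ℝ → ℝ)
    (hg2 : ∀ y, 0 ≤ y → y ≤ a 0 → g y ∈ Set.Icc (0:ℝ) 1 ∧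
      (∑' n : ℕ, a n * (1 - g y) ^ n) - (1 - g y) = y) :
    ∃ c₁ c₂ t₀ : ℝ, 0 < c₁ ∧ c₁ < c₂ ∧ 0 < t₀ ∧ t₀ < 1 ∧
      ∀ t : ℝ, t₀ < t → t < 1 →
        c₁ * g (1 - t) ≤ 1 - F t ∧ 1 - F t ≤ c₂ * g (1 - t) := by
  have hstar : ∀ c x, 0 ≤ c → c ≤ 1 → 0 ≤ x → x ≤ 1 → psi a (c * x) ≤ c * psi a x :=
    fun _ _ => psi_mul_le ha hsum
  obtain ⟨t₁, ht₁, hFhalf⟩ := (nhdsLT_basis (1 : ℝ)).eventually_iff.1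
    (hFlim.eventually (eventually_ge_nhds (by norm_num : (1 / 2 : ℝ) < 1)))
  refine ⟨1 / 2, 2, max t₁ (max (1 - a 0) (1 / 2)), by norm_num, by norm_num,
    by positivity, max_lt ht₁ (max_lt (by linarith) (by norm_num)), fun t ht ht1 => ?_⟩
  simp only [max_lt_iff] at ht
  obtain ⟨ht₁t, hta, hthalf⟩ := ht
  obtain ⟨hF0, hF1⟩ := hF t (by linarith) ht1
  have hFt : 1 / 2 ≤ F t := hFhalf ⟨ht₁t, ht1⟩
  obtain ⟨hg, hpsig⟩ := hg2 (1 - t) (by linarith) (by linarith)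
  replace hpsig : psi a (g (1 - t)) = 1 - t := hpsig
  have hpsiF := psi_one_sub_of_eq_mul_tsum (t := t) (by linarith) (hFeq t (by linarith) ht1)
  have hupper : psi a (1 - F t) ≤ 2 * psi a (g (1 - t)) := by
    rw [hpsiF, hpsig, div_le_iff₀ (by linarith)]
    nlinarith
  have hlower : psi a (g (1 - t)) ≤ 2 * psi a (1 - F t) := by
    rw [hpsiF, hpsig, mul_div_assoc', le_div_iff₀ (by linarith)]
    nlinarith
  constructor
  · linarith [le_mul_of_apply_le_mul_apply hstar (by linarith) hg.2 one_le_two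
      (by rw [hpsiF]; exact div_pos (mul_pos hF0 (by linarith)) (by linarith)) hlower]
  · exact le_mul_of_apply_le_mul_apply hstar hg.1 (by linarith) one_le_two
      (by rw [hpsig]; linarith) hupper

theorem stmt_9 (a : ℕ → ℝ) (ha : ∀ n, 0 ≤ a n) (ha0 : 0 < a 0)
    (ha01 : a 0 + a 1 < 1)
    (hsum : ∑' n, a n = 1) (hμ : ∑' n : ℕ, (n : ℝ) * a n = 1)
    (F : ℝ → ℝ)
    (hF : ∀ t : ℝ, 0 < t → t < 1 → 0 < F t ∧ F t < 1)
    (hFeq : ∀ t : ℝ, 0 < t → t < 1 → F t = t * ∑' n : ℕ, a n * F t ^ n)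
    (hFlim : Filter.Tendsto F (nhdsWithin 1 (Set.Iio 1)) (nhds 1))
    (g : ℝ → ℝ)
    (hg1 : ∀ y, a 0 ≤ y → g y = 1)
    (hg2 : ∀ y, 0 ≤ y → y ≤ a 0 → g y ∈ Set.Icc (0:ℝ) 1 ∧
      (∑' n : ℕ, a n * (1 - g y) ^ n) - (1 - g y) = y) :
    ∃ c₁ c₂ t₀ : ℝ, 0 < c₁ ∧ c₁ < c₂ ∧ 0 < t₀ ∧ t₀ < 1 ∧
      ∀ t : ℝ, t₀ < t → t < 1 →
        c₁ * g (1 - t) ≤ 1 - F t ∧ 1 - F t ≤ c₂ * g (1 - t) :=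
  stmt_9_general a ha ha0 hsum F hF hFeq hFlim g hg2
end

section
/- Let ψ₁, ψ₂ ∈ ℋ' and let n be a positive integer. (1) If there exists x₀ > 0 such that ψ₁(x) ≤ n·ψ₂(x) for all x ∈ (0, x₀), then there exists y₀ > 0 such that ψ₂^{−1}(y) ≤ n·ψ₁^{−1}(y) for all y ∈ (0, y₀). (2) If there exists x₀ > 0 such that ψ₁(x) ≥ n²·ψ₂(x) for all x ∈ (0, x₀), then there exists y₀ > 0 such that ψ₂^{−1}(y) ≥ n·ψ₁^{−1}(y) for all y ∈ (0, y₀). -/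
/-! Superadditivity gives `n ψ₂ x ≤ ψ₂ (n x)` and (c2) gives `ψ₂ x ≤ n² ψ₂ (x / n)`, so in both
parts the hypothesis turns into a comparison `f x ≤ g (c x)` near `0`, with `c = n` resp.
`c = 1 / n`. Since both functions are strictly increasing, such a comparison inverts to
`g⁻¹ y ≤ c f⁻¹ y` near `0`. -/

open Set

theorem natCast_mul_apply_le_apply_natCast_mul (f : ℝ → ℝ) (hf0 : f 0 = 0)
    (hadd : ∀ x y : ℝ, 0 ≤ x → 0 ≤ y → x + y ≤ 1 → f x + f y ≤ f (x + y)) (m : ℕ) :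
    ∀ x : ℝ, 0 ≤ x → (m : ℝ) * x ≤ 1 → (m : ℝ) * f x ≤ f ((m : ℝ) * x) := by
  induction m with
  | zero => intro x _ _; simp [hf0]
  | succ k ih =>
    intro x hx hkx
    push_cast at hkx ⊢
    simp only [add_mul, one_mul] at hkx ⊢
    have hk : (k : ℝ) * x ≤ 1 := by linarith
    linarith [ih x hx hk, hadd _ _ (by positivity) hx hkx]

section Inverse

variable {f finv : ℝ → ℝ} (hf : StrictMonoOn f (Icc 0 1))
  (hfinv : ∀ y, 0 ≤ y → y ≤ f 1 → finv y ∈ Icc (0:ℝ) 1 ∧ f (finv y) = y)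
include hf hfinv

theorem inverse_le_iff {x y : ℝ} (hy₀ : 0 ≤ y) (hy₁ : y ≤ f 1) (hx : x ∈ Icc 0 1) :
    finv y ≤ x ↔ y ≤ f x := by
  obtain ⟨hmem, heq⟩ := hfinv y hy₀ hy₁
  conv_rhs => rw [← heq]
  exact (hf.le_iff_le hmem hx).symm

theorem inverse_lt_iff {x y : ℝ} (hy₀ : 0 ≤ y) (hy₁ : y ≤ f 1) (hx : x ∈ Icc 0 1) :
    finv y < x ↔ y < f x := by
  obtain ⟨hmem, heq⟩ := hfinv y hy₀ hy₁
  conv_rhs => rw [← heq]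
  exact (hf.lt_iff_lt hmem hx).symm

theorem inverse_le_mul_inverse_of_le_apply_mul (hf0 : f 0 = 0) {g ginv : ℝ → ℝ}
    (hg : StrictMonoOn g (Icc 0 1))
    (hginv : ∀ y, 0 ≤ y → y ≤ g 1 → ginv y ∈ Icc (0:ℝ) 1 ∧ g (ginv y) = y)
    {c x₀ : ℝ} (hc : 0 ≤ c) (hx₀ : 0 < x₀) (hcx₀ : c * x₀ ≤ 1)
    (hfg : ∀ x, 0 < x → x < x₀ → f x ≤ g (c * x)) :
    ∃ y₀ : ℝ, 0 < y₀ ∧ ∀ y : ℝ, 0 < y → y < y₀ → ginv y ≤ c * finv y := by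
  set δ := min x₀ 1
  have hδ : δ ∈ Icc (0:ℝ) 1 := ⟨le_min hx₀.le zero_le_one, min_le_right _ _⟩
  have hfδ : 0 < f δ := by
    simpa [hf0] using hf (left_mem_Icc.2 zero_le_one) hδ (lt_min hx₀ one_pos)
  refine ⟨f δ, hfδ, fun y hy hyδ => ?_⟩
  have hy₁ : y ≤ f 1 := hyδ.le.trans (hf.monotoneOn hδ (right_mem_Icc.2 zero_le_one) hδ.2)
  obtain ⟨hx, hfx⟩ := hfinv y hy.le hy₁
  have hxδ : finv y < δ := (inverse_lt_iff hf hfinv hy.le hy₁ hδ).2 hyδ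
  have hx0 : 0 < finv y :=
    hx.1.lt_of_ne fun h => hy.ne' (by rw [← hfx, ← h, hf0])
  have hcx : c * finv y ∈ Icc (0:ℝ) 1 :=
    ⟨by positivity, (mul_le_mul_of_nonneg_left (hxδ.le.trans (min_le_left _ _)) hc).trans hcx₀⟩
  have hyg : y ≤ g (c * finv y) := by
    simpa only [hfx] using hfg _ hx0 (hxδ.trans_le (min_le_left _ _))
  have hyg₁ : y ≤ g 1 := hyg.trans (hg.monotoneOn hcx (right_mem_Icc.2 zero_le_one) hcx.2)
  exact (inverse_le_iff hg hginv hy.le hyg₁ hcx).2 hyg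

end Inverse

section Comparison

variable {ψ₁ ψ₂ g₁ g₂ : ℝ → ℝ} (h1m : StrictMonoOn ψ₁ (Icc 0 1)) (h2m : StrictMonoOn ψ₂ (Icc 0 1))
  (hg12 : ∀ y, 0 ≤ y → y ≤ ψ₁ 1 → g₁ y ∈ Icc (0:ℝ) 1 ∧ ψ₁ (g₁ y) = y)
  (hg22 : ∀ y, 0 ≤ y → y ≤ ψ₂ 1 → g₂ y ∈ Icc (0:ℝ) 1 ∧ ψ₂ (g₂ y) = y)
  {n : ℕ} (hn : 0 < n)
include h1m h2m hg12 hg22 hn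

theorem inverse_le_natCast_mul_inverse (h10 : ψ₁ 0 = 0) (h20 : ψ₂ 0 = 0)
    (h2c1 : ∀ x y : ℝ, 0 ≤ x → 0 ≤ y → x + y ≤ 1 → ψ₂ x + ψ₂ y ≤ ψ₂ (x + y))
    (hle : ∃ x₀ : ℝ, 0 < x₀ ∧ ∀ x : ℝ, 0 < x → x < x₀ → ψ₁ x ≤ (n : ℝ) * ψ₂ x) :
    ∃ y₀ : ℝ, 0 < y₀ ∧ ∀ y : ℝ, 0 < y → y < y₀ → g₂ y ≤ (n : ℝ) * g₁ y := by
  obtain ⟨x₀, hx₀, hle⟩ := hle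
  have hnR : (0 : ℝ) < n := Nat.cast_pos.2 hn
  refine inverse_le_mul_inverse_of_le_apply_mul h1m hg12 h10 h2m hg22 hnR.le
    (lt_min hx₀ (by positivity)) ((mul_le_mul_of_nonneg_left (min_le_right _ _) hnR.le).trans
      (mul_one_div_cancel hnR.ne').le) fun x hx hxδ => ?_
  have hnx : (n : ℝ) * x ≤ 1 :=
    (le_div_iff₀' hnR).1 (by simpa using (hxδ.trans_le (min_le_right _ _)).le)
  exact (hle x hx (hxδ.trans_le (min_le_left _ _))).trans
    (natCast_mul_apply_le_apply_natCast_mul ψ₂ h20 h2c1 n x hx.le hnx)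

theorem natCast_mul_inverse_le_inverse (h20 : ψ₂ 0 = 0)
    (h2c2 : ∀ m : ℕ, 0 < m → ∀ x : ℝ, 0 ≤ x → x ≤ 1 / m → ψ₂ (m * x) ≤ (m : ℝ) ^ 2 * ψ₂ x)
    (hge : ∃ x₀ : ℝ, 0 < x₀ ∧ ∀ x : ℝ, 0 < x → x < x₀ → (n : ℝ) ^ 2 * ψ₂ x ≤ ψ₁ x) :
    ∃ y₀ : ℝ, 0 < y₀ ∧ ∀ y : ℝ, 0 < y → y < y₀ → (n : ℝ) * g₁ y ≤ g₂ y := by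
  obtain ⟨x₀, hx₀, hge⟩ := hge
  have hnR : (0 : ℝ) < n := Nat.cast_pos.2 hn
  have hn1 : (1 : ℝ) ≤ n := Nat.one_le_cast.2 hn
  have hinv : (n : ℝ)⁻¹ ≤ 1 := inv_le_one_of_one_le₀ hn1
  obtain ⟨y₀, hy₀, hy⟩ := inverse_le_mul_inverse_of_le_apply_mul h2m hg22 h20 h1m hg12
    (inv_nonneg.2 hnR.le) (lt_min hx₀ one_pos)
    ((mul_le_mul_of_nonneg_left (min_le_right _ _) (inv_nonneg.2 hnR.le)).trans (by simpa))
    fun x hx hxδ => by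
      have hxn : 0 < (n : ℝ)⁻¹ * x := by positivity
      have hx1 : (n : ℝ)⁻¹ * x ≤ 1 / n := by
        rw [one_div]; exact mul_le_of_le_one_right (by positivity) (hxδ.le.trans (min_le_right _ _))
      calc ψ₂ x = ψ₂ (n * ((n : ℝ)⁻¹ * x)) := by rw [mul_inv_cancel_left₀ hnR.ne']
        _ ≤ (n : ℝ) ^ 2 * ψ₂ ((n : ℝ)⁻¹ * x) := h2c2 n hn _ hxn.le hx1
        _ ≤ ψ₁ ((n : ℝ)⁻¹ * x) := hge _ hxn ((mul_le_of_le_one_left hx.le hinv).trans_lt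
            (hxδ.trans_le (min_le_left _ _)))
  exact ⟨y₀, hy₀, fun y hy0 hyy₀ => (le_inv_mul_iff₀ hnR).1 (hy y hy0 hyy₀)⟩

end Comparison

theorem stmt_11_general (ψ₁ ψ₂ : ℝ → ℝ)
    (h1m : StrictMonoOn ψ₁ (Set.Icc 0 1))
    (h10 : ψ₁ 0 = 0)
    (h2m : StrictMonoOn ψ₂ (Set.Icc 0 1))
    (h20 : ψ₂ 0 = 0)
    (h2c1 : ∀ x y : ℝ, 0 ≤ x → 0 ≤ y → x + y ≤ 1 → ψ₂ x + ψ₂ y ≤ ψ₂ (x + y))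
    (h2c2 : ∀ m : ℕ, 0 < m → ∀ x : ℝ, 0 ≤ x → x ≤ 1 / m →
      ψ₂ (m * x) ≤ (m : ℝ) ^ 2 * ψ₂ x)
    (g₁ : ℝ → ℝ)
    (hg12 : ∀ y, 0 ≤ y → y ≤ ψ₁ 1 → g₁ y ∈ Set.Icc (0:ℝ) 1 ∧ ψ₁ (g₁ y) = y)
    (g₂ : ℝ → ℝ)
    (hg22 : ∀ y, 0 ≤ y → y ≤ ψ₂ 1 → g₂ y ∈ Set.Icc (0:ℝ) 1 ∧ ψ₂ (g₂ y) = y)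
    (n : ℕ) (hn : 0 < n) :
    ((∃ x₀ : ℝ, 0 < x₀ ∧ ∀ x : ℝ, 0 < x → x < x₀ → ψ₁ x ≤ (n : ℝ) * ψ₂ x) →
      ∃ y₀ : ℝ, 0 < y₀ ∧ ∀ y : ℝ, 0 < y → y < y₀ → g₂ y ≤ (n : ℝ) * g₁ y) ∧
    ((∃ x₀ : ℝ, 0 < x₀ ∧ ∀ x : ℝ, 0 < x → x < x₀ → (n : ℝ) ^ 2 * ψ₂ x ≤ ψ₁ x) →
      ∃ y₀ : ℝ, 0 < y₀ ∧ ∀ y : ℝ, 0 < y → y < y₀ → (n : ℝ) * g₁ y ≤ g₂ y) :=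
  ⟨inverse_le_natCast_mul_inverse h1m h2m hg12 hg22 hn h10 h20 h2c1,
    natCast_mul_inverse_le_inverse h1m h2m hg12 hg22 hn h20 h2c2⟩

theorem stmt_11 (ψ₁ ψ₂ : ℝ → ℝ)
    (h1c : ContinuousOn ψ₁ (Set.Icc 0 1)) (h1m : StrictMonoOn ψ₁ (Set.Icc 0 1))
    (h10 : ψ₁ 0 = 0) (h1nn : ∀ x ∈ Set.Icc (0:ℝ) 1, 0 ≤ ψ₁ x)
    (h1c1 : ∀ x y : ℝ, 0 ≤ x → 0 ≤ y → x + y ≤ 1 → ψ₁ x + ψ₁ y ≤ ψ₁ (x + y))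
    (h1c2 : ∀ m : ℕ, 0 < m → ∀ x : ℝ, 0 ≤ x → x ≤ 1 / m →
      ψ₁ (m * x) ≤ (m : ℝ) ^ 2 * ψ₁ x)
    (h2c : ContinuousOn ψ₂ (Set.Icc 0 1)) (h2m : StrictMonoOn ψ₂ (Set.Icc 0 1))
    (h20 : ψ₂ 0 = 0) (h2nn : ∀ x ∈ Set.Icc (0:ℝ) 1, 0 ≤ ψ₂ x)
    (h2c1 : ∀ x y : ℝ, 0 ≤ x → 0 ≤ y → x + y ≤ 1 → ψ₂ x + ψ₂ y ≤ ψ₂ (x + y))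
    (h2c2 : ∀ m : ℕ, 0 < m → ∀ x : ℝ, 0 ≤ x → x ≤ 1 / m →
      ψ₂ (m * x) ≤ (m : ℝ) ^ 2 * ψ₂ x)
    (g₁ : ℝ → ℝ)
    (hg11 : ∀ y, ψ₁ 1 ≤ y → g₁ y = 1)
    (hg12 : ∀ y, 0 ≤ y → y ≤ ψ₁ 1 → g₁ y ∈ Set.Icc (0:ℝ) 1 ∧ ψ₁ (g₁ y) = y)
    (g₂ : ℝ → ℝ)
    (hg21 : ∀ y, ψ₂ 1 ≤ y → g₂ y = 1)
    (hg22 : ∀ y, 0 ≤ y → y ≤ ψ₂ 1 → g₂ y ∈ Set.Icc (0:ℝ) 1 ∧ ψ₂ (g₂ y) = y)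
    (n : ℕ) (hn : 0 < n) :
    ((∃ x₀ : ℝ, 0 < x₀ ∧ ∀ x : ℝ, 0 < x → x < x₀ → ψ₁ x ≤ (n : ℝ) * ψ₂ x) →
      ∃ y₀ : ℝ, 0 < y₀ ∧ ∀ y : ℝ, 0 < y → y < y₀ → g₂ y ≤ (n : ℝ) * g₁ y) ∧
    ((∃ x₀ : ℝ, 0 < x₀ ∧ ∀ x : ℝ, 0 < x → x < x₀ → (n : ℝ) ^ 2 * ψ₂ x ≤ ψ₁ x) →
      ∃ y₀ : ℝ, 0 < y₀ ∧ ∀ y : ℝ, 0 < y → y < y₀ → (n : ℝ) * g₁ y ≤ g₂ y) :=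
  stmt_11_general ψ₁ ψ₂ h1m h10 h2m h20 h2c1 h2c2 g₁ hg12 g₂ hg22 n hn
end

section
/- Let (a_n)_{n≥0} be nonnegative reals with a_0 > 0, a_0 + a_1 < 1, ∑_{n=0}^∞ a_n = 1 and ∑_{n=1}^∞ n a_n = 1, and assume ∑_{n=2}^∞ n(n−1)a_n < ∞ (i.e. G''(1) < ∞). Let G(t) = ∑_{n=0}^∞ a_n t^n and let (f_n)_{n≥1} be nonnegative reals with ∑_{n=1}^∞ f_n = 1 such that F(t) := ∑_{n=1}^∞ f_n t^n satisfies F(t) = t·G(F(t)) for all t ∈ (0,1). Then: (1) there exist constants 0 < c₁ < c₂ and t₀ ∈ (0,1) such that c₁√(1−t) ≤ 1 − F(t) ≤ c₂√(1−t) for all t ∈ (t₀,1); (2) for α ∈ (0,1), ∑_{n=1}^∞ f_n n^α < ∞ if and only if α < 1/2. -/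
/-!
Write `G` and `F` for the generating functions of `a` and `f`, and `s = F(t)`. Since
`G(1) = G'(1) = 1`, `G(s) - s = ∑ aₙ (sⁿ - 1 - n(s - 1))`, and each bracket lies between `(1 - s)²`
(for `n ≥ 2`) and `n(n - 1)/2 · (1 - s)²`, so `G(s) - s ≍ (1 - s)²`. The functional equation reads
`G(s) - s = (1 - t) G(s)` with `a₀ ≤ G(s) ≤ 1`, hence `1 - F(t) ≍ √(1 - t)`.

For the moments: the upper bound at `t = 1 - 1/(2N)` gives `∑_{n ≥ N} fₙ = O(N^{-1/2})`, and
`n^α ≤ ∑_{k=1}^n k^{α-1}` turns `∑ fₙ n^α` into `∑ k^{α-1} ∑_{n ≥ k} fₙ = O(∑ k^{α-3/2})`, finite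
for `α < 1/2`. Conversely, if `∑ fₙ √n < ∞` then dominated convergence, with
`1 - tⁿ ≤ √(n(1 - t))`, gives `1 - F(t) = o(√(1 - t))`, contradicting the lower bound.
-/

open Finset Filter Topology

lemma summable_of_tsum_ne_zero {ι α : Type*} [AddCommMonoid α] [TopologicalSpace α]
    {f : ι → α} (h : ∑' i, f i ≠ 0) : Summable f :=
  by_contra fun hf => h (tsum_eq_zero_of_not_summable hf)

section Bernoulli

variable {s : ℝ}

lemma one_sub_pow_le_mul_one_sub (hs0 : 0 ≤ s) (n : ℕ) : 1 - s ^ n ≤ n * (1 - s) := by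
  have := one_add_mul_le_pow (a := s - 1) (by linarith) n
  rw [add_sub_cancel] at this
  linarith

lemma one_sub_pow_le_sqrt (hs0 : 0 ≤ s) (hs1 : s ≤ 1) (n : ℕ) :
    1 - s ^ n ≤ √n * √(1 - s) := by
  have hpow : s ^ n ≤ 1 := pow_le_one₀ hs0 hs1
  rw [← Real.sqrt_mul (Nat.cast_nonneg n), Real.le_sqrt (by linarith) (by nlinarith)]
  nlinarith [one_sub_pow_le_mul_one_sub hs0 n, pow_nonneg hs0 n]

lemma pow_sub_one_sub_mul_nonneg (hs0 : 0 ≤ s) (n : ℕ) : 0 ≤ s ^ n - 1 - n * (s - 1) := by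
  linarith [one_sub_pow_le_mul_one_sub hs0 n]

lemma pow_succ_sub_one_sub_mul (n : ℕ) :
    s ^ (n + 1) - 1 - (n + 1 : ℕ) * (s - 1)
      = s ^ n - 1 - n * (s - 1) + (1 - s) * (1 - s ^ n) := by
  push_cast; ring

lemma sq_one_sub_le_pow_sub_one_sub_mul (hs0 : 0 ≤ s) (hs1 : s ≤ 1) {n : ℕ} (hn : 2 ≤ n) :
    (1 - s) ^ 2 ≤ s ^ n - 1 - n * (s - 1) := by
  induction n, hn using Nat.le_induction with
  | base => push_cast; nlinarith
  | succ n _ ih =>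
    rw [pow_succ_sub_one_sub_mul]
    nlinarith [pow_le_one₀ hs0 hs1 (n := n)]

lemma pow_sub_one_sub_mul_le (hs0 : 0 ≤ s) (hs1 : s ≤ 1) (n : ℕ) :
    s ^ n - 1 - n * (s - 1) ≤ n * (n - 1) / 2 * (1 - s) ^ 2 := by
  induction n with
  | zero => simp
  | succ n ih =>
    rw [pow_succ_sub_one_sub_mul]
    have := mul_le_mul_of_nonneg_left (one_sub_pow_le_mul_one_sub hs0 n) (sub_nonneg.2 hs1)
    push_cast
    nlinarith

end Bernoulli

noncomputable def pgf (c : ℕ → ℝ) (t : ℝ) : ℝ := ∑' n, c n * t ^ n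

section ProbabilityGeneratingFunction

variable {c : ℕ → ℝ} {t : ℝ}

lemma summable_mul_pow (hc : ∀ n, 0 ≤ c n) (hs : Summable c) (ht0 : 0 ≤ t) (ht1 : t ≤ 1) :
    Summable fun n => c n * t ^ n :=
  hs.of_nonneg_of_le (fun n => mul_nonneg (hc n) (pow_nonneg ht0 n))
    fun n => mul_le_of_le_one_right (hc n) (pow_le_one₀ ht0 ht1)

lemma pgf_nonneg (hc : ∀ n, 0 ≤ c n) (ht0 : 0 ≤ t) : 0 ≤ pgf c t :=
  tsum_nonneg fun n => mul_nonneg (hc n) (pow_nonneg ht0 n)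

lemma apply_zero_le_pgf (hc : ∀ n, 0 ≤ c n) (hs : Summable c) (ht0 : 0 ≤ t) (ht1 : t ≤ 1) :
    c 0 ≤ pgf c t := by
  simpa [pgf] using (summable_mul_pow hc hs ht0 ht1).le_tsum 0
    fun n _ => mul_nonneg (hc n) (pow_nonneg ht0 n)

lemma pgf_le_one (hc : ∀ n, 0 ≤ c n) (h1 : ∑' n, c n = 1) (ht0 : 0 ≤ t) (ht1 : t ≤ 1) :
    pgf c t ≤ 1 := by
  have hs := summable_of_tsum_ne_zero (h1 ▸ one_ne_zero)
  rw [← h1]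
  exact (summable_mul_pow hc hs ht0 ht1).tsum_le_tsum
    (fun n => mul_le_of_le_one_right (hc n) (pow_le_one₀ ht0 ht1)) hs

lemma one_sub_pgf (hc : ∀ n, 0 ≤ c n) (h1 : ∑' n, c n = 1) (ht0 : 0 ≤ t) (ht1 : t ≤ 1) :
    1 - pgf c t = ∑' n, c n * (1 - t ^ n) := by
  have hs := summable_of_tsum_ne_zero (h1 ▸ one_ne_zero)
  simp only [mul_one_sub]
  rw [(hs.hasSum.sub (summable_mul_pow hc hs ht0 ht1).hasSum).tsum_eq, h1, pgf]

end ProbabilityGeneratingFunction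

noncomputable def secondFactorialMoment (a : ℕ → ℝ) : ℝ := ∑' n : ℕ, n * (n - 1) * a n

section Gap

variable {a : ℕ → ℝ} {s : ℝ}

lemma hasSum_pgf_sub_self (ha : ∀ n, 0 ≤ a n) (hsum : ∑' n, a n = 1)
    (hμ : ∑' n : ℕ, n * a n = 1) (hs0 : 0 ≤ s) (hs1 : s ≤ 1) :
    HasSum (fun n => a n * (s ^ n - 1 - n * (s - 1))) (pgf a s - s) := by
  have ha_sum := summable_of_tsum_ne_zero (hsum ▸ one_ne_zero)
  have hμ_sum := summable_of_tsum_ne_zero (hμ ▸ one_ne_zero)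
  have h := ((summable_mul_pow ha ha_sum hs0 hs1).hasSum.sub ha_sum.hasSum).sub
    (hμ_sum.hasSum.mul_left (s - 1))
  rw [hsum, hμ, ← pgf, mul_one, sub_sub, add_sub_cancel] at h
  exact h.congr_fun fun n => by ring

lemma mul_sq_le_pgf_sub_self (ha : ∀ n, 0 ≤ a n) (hsum : ∑' n, a n = 1)
    (hμ : ∑' n : ℕ, n * a n = 1) (hs0 : 0 ≤ s) (hs1 : s ≤ 1) {m : ℕ} (hm : 2 ≤ m) :
    a m * (1 - s) ^ 2 ≤ pgf a s - s :=
  (mul_le_mul_of_nonneg_left (sq_one_sub_le_pow_sub_one_sub_mul hs0 hs1 hm) (ha m)).trans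
    (le_hasSum (hasSum_pgf_sub_self ha hsum hμ hs0 hs1) m
      fun n _ => mul_nonneg (ha n) (pow_sub_one_sub_mul_nonneg hs0 n))

lemma pgf_sub_self_le (ha : ∀ n, 0 ≤ a n) (hsum : ∑' n, a n = 1)
    (hμ : ∑' n : ℕ, n * a n = 1) (hG2 : Summable fun n : ℕ => n * (n - 1) * a n)
    (hs0 : 0 ≤ s) (hs1 : s ≤ 1) :
    pgf a s - s ≤ secondFactorialMoment a / 2 * (1 - s) ^ 2 := by
  have := hasSum_le (fun n => ?_) (hasSum_pgf_sub_self ha hsum hμ hs0 hs1)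
    (hG2.hasSum.mul_right ((1 - s) ^ 2 / 2))
  · rwa [secondFactorialMoment, div_mul_eq_mul_div, mul_div_assoc]
  · have := mul_le_mul_of_nonneg_left (pow_sub_one_sub_mul_le hs0 hs1 n) (ha n)
    linarith

end Gap

lemma exists_two_le_pos_of_add_lt {a : ℕ → ℝ} (ha : ∀ n, 0 ≤ a n) (ha01 : a 0 + a 1 < 1)
    (hsum : ∑' n, a n = 1) : ∃ m, 2 ≤ m ∧ 0 < a m := by
  by_contra! h
  have : ∑' n, a n = ∑ n ∈ range 2, a n :=
    tsum_eq_sum fun n hn => le_antisymm (h n (by simp at hn; omega)) (ha n)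
  simp only [sum_range_succ, sum_range_zero, zero_add] at this
  linarith

section FirstReturn

variable {a f : ℕ → ℝ} {t : ℝ}

lemma one_sub_pgf_le_sqrt (ha : ∀ n, 0 ≤ a n) (hsum : ∑' n, a n = 1)
    (hμ : ∑' n : ℕ, n * a n = 1) {m : ℕ} (hm : 2 ≤ m) (ham : 0 < a m)
    (hf : ∀ n, 0 ≤ f n) (hfsum : ∑' n, f n = 1) (ht0 : 0 < t) (ht1 : t < 1)
    (hFeq : pgf f t = t * pgf a (pgf f t)) :
    1 - pgf f t ≤ √(1 / a m) * √(1 - t) := by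
  set s := pgf f t
  have hs0 : 0 ≤ s := pgf_nonneg hf ht0.le
  have hs1 : s ≤ 1 := pgf_le_one hf hfsum ht0.le ht1.le
  have hgap := mul_sq_le_pgf_sub_self ha hsum hμ hs0 hs1 hm
  have hG1 := pgf_le_one ha hsum hs0 hs1
  rw [← Real.sqrt_mul (by positivity), Real.le_sqrt (by linarith) (by positivity),
    one_div_mul_eq_div, le_div_iff₀ ham]
  nlinarith

lemma sqrt_le_one_sub_pgf (ha : ∀ n, 0 ≤ a n) (hsum : ∑' n, a n = 1)
    (hμ : ∑' n : ℕ, n * a n = 1) (hG2 : Summable fun n : ℕ => n * (n - 1) * a n)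
    (hσ : 0 < secondFactorialMoment a)
    (hf : ∀ n, 0 ≤ f n) (hfsum : ∑' n, f n = 1) (ht0 : 0 < t) (ht1 : t < 1)
    (hFeq : pgf f t = t * pgf a (pgf f t)) :
    √(2 * a 0 / secondFactorialMoment a) * √(1 - t) ≤ 1 - pgf f t := by
  set s := pgf f t
  have hs0 : 0 ≤ s := pgf_nonneg hf ht0.le
  have hs1 : s ≤ 1 := pgf_le_one hf hfsum ht0.le ht1.le
  have hgap := pgf_sub_self_le ha hsum hμ hG2 hs0 hs1
  have hG0 := apply_zero_le_pgf ha (summable_of_tsum_ne_zero (hsum ▸ one_ne_zero)) hs0 hs1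
  rw [← Real.sqrt_mul (div_nonneg (mul_nonneg zero_le_two (ha 0)) hσ.le),
    Real.sqrt_le_left (by linarith), div_mul_eq_mul_div, div_le_iff₀ hσ]
  nlinarith

lemma one_sub_pow_mul_tsum_nat_add_le (hf : ∀ n, 0 ≤ f n) (hfsum : ∑' n, f n = 1)
    (ht0 : 0 ≤ t) (ht1 : t ≤ 1) (N : ℕ) :
    (1 - t ^ N) * ∑' n, f (n + N) ≤ 1 - pgf f t := by
  have hs := summable_of_tsum_ne_zero (hfsum ▸ one_ne_zero)
  have hterm : ∀ n, 0 ≤ f n * (1 - t ^ n) := fun n =>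
    mul_nonneg (hf n) (sub_nonneg.2 (pow_le_one₀ ht0 ht1))
  have hsum' : Summable fun n => f n * (1 - t ^ n) :=
    hs.of_nonneg_of_le hterm fun n => mul_le_of_le_one_right (hf n) (by linarith [pow_nonneg ht0 n])
  rw [one_sub_pgf hf hfsum ht0 ht1, ← hsum'.sum_add_tsum_nat_add N, ← tsum_mul_left]
  refine le_add_of_nonneg_of_le (sum_nonneg fun n _ => hterm n) ?_
  refine ((summable_nat_add_iff N).2 hs |>.mul_left _).tsum_le_tsum (fun n => ?_)
    ((summable_nat_add_iff N).2 hsum')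
  rw [mul_comm]
  exact mul_le_mul_of_nonneg_left
    (by linarith [pow_le_pow_of_le_one ht0 ht1 (Nat.le_add_left N n)]) (hf _)

end FirstReturn

lemma tsum_nat_add_le_of_one_sub_pgf_le {f : ℕ → ℝ} (hf : ∀ n, 0 ≤ f n) (hfsum : ∑' n, f n = 1)
    {C : ℝ} (hC : 0 ≤ C) (hup : ∀ t, 0 < t → t < 1 → 1 - pgf f t ≤ C * √(1 - t))
    {N : ℕ} (hN : 1 ≤ N) : ∑' n, f (n + N) ≤ 3 * C * (N : ℝ) ^ (-(1 / 2) : ℝ) := by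
  have hN' : (1 : ℝ) ≤ N := by exact_mod_cast hN
  set t : ℝ := 1 - (1 / 2) / N
  have hx : 1 - t = (1 / 2) / N := sub_sub_cancel _ _
  have hx0 : 0 < (1 / 2) / (N : ℝ) := by positivity
  have hx1 : (1 / 2) / (N : ℝ) ≤ 1 / 2 := div_le_self (by norm_num) hN'
  have ht0 : 0 < t := by linarith
  have ht1 : t < 1 := by linarith
  have htN : t ^ N ≤ 2 / 3 := by
    refine (Real.one_sub_div_pow_le_exp_neg (by linarith)).trans ?_
    rw [Real.exp_neg, inv_le_comm₀ (Real.exp_pos _) (by norm_num)]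
    linarith [Real.add_one_le_exp (1 / 2)]
  have hsqrt : √(1 - t) ≤ (N : ℝ) ^ (-(1 / 2) : ℝ) := by
    rw [Real.rpow_neg (by positivity), ← Real.sqrt_eq_rpow, ← Real.sqrt_inv, hx, inv_eq_one_div]
    gcongr
    norm_num
  have htail := one_sub_pow_mul_tsum_nat_add_le hf hfsum ht0.le ht1.le N
  have hT0 : 0 ≤ ∑' n, f (n + N) := tsum_nonneg fun n => hf _
  nlinarith [hup t ht0 ht1, mul_le_mul_of_nonneg_left hsqrt hC]

lemma rpow_le_sum_Icc_rpow_sub_one {α : ℝ} (hα0 : 0 < α) (hα1 : α ≤ 1) (n : ℕ) :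
    (n : ℝ) ^ α ≤ ∑ k ∈ Icc 1 n, (k : ℝ) ^ (α - 1) := by
  rcases Nat.eq_zero_or_pos n with rfl | hn
  · simp [Real.zero_rpow hα0.ne']
  have hn' : (0 : ℝ) < n := by exact_mod_cast hn
  calc (n : ℝ) ^ α = (Icc 1 n).card • (n : ℝ) ^ (α - 1) := by
        rw [Nat.card_Icc, add_tsub_cancel_right, nsmul_eq_mul, Real.rpow_sub_one hn'.ne']
        field_simp
    _ ≤ ∑ k ∈ Icc 1 n, (k : ℝ) ^ (α - 1) := by
        refine card_nsmul_le_sum _ _ _ fun k hk => ?_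
        obtain ⟨hk1, hkn⟩ := mem_Icc.1 hk
        exact Real.rpow_le_rpow_of_nonpos (by exact_mod_cast hk1) (by exact_mod_cast hkn)
          (by linarith)

lemma sum_Ico_le_tsum_nat_add {f : ℕ → ℝ} (hf : ∀ n, 0 ≤ f n) (hs : Summable f) (k K : ℕ) :
    ∑ n ∈ Ico k K, f n ≤ ∑' n, f (n + k) := by
  rw [sum_Ico_eq_sum_range]
  simp_rw [add_comm k]
  exact ((summable_nat_add_iff k).2 hs).sum_le_tsum _ fun n _ => hf _

lemma summable_mul_rpow_of_tsum_nat_add_le {f : ℕ → ℝ} (hf : ∀ n, 0 ≤ f n) (hs : Summable f)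
    {C : ℝ} (hC : 0 ≤ C) (htail : ∀ N : ℕ, 1 ≤ N → ∑' n, f (n + N) ≤ C * (N : ℝ) ^ (-(1 / 2) : ℝ))
    {α : ℝ} (hα0 : 0 < α) (hα : α < 1 / 2) :
    Summable fun n : ℕ => f n * (n : ℝ) ^ α := by
  have hM : Summable fun k : ℕ => (k : ℝ) ^ (α - 3 / 2) := Real.summable_nat_rpow.2 (by linarith)
  refine summable_of_sum_range_le (c := C * ∑' k : ℕ, (k : ℝ) ^ (α - 3 / 2))
    (fun n => mul_nonneg (hf n) (by positivity)) fun K => ?_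
  calc ∑ n ∈ range K, f n * (n : ℝ) ^ α
      ≤ ∑ n ∈ range K, ∑ k ∈ Icc 1 n, f n * (k : ℝ) ^ (α - 1) := by
        gcongr with n
        rw [← mul_sum]
        exact mul_le_mul_of_nonneg_left (rpow_le_sum_Icc_rpow_sub_one hα0 (by linarith) n) (hf n)
    _ = ∑ k ∈ Ico 1 K, (∑ n ∈ Ico k K, f n) * (k : ℝ) ^ (α - 1) := by
        simp_rw [sum_mul]
        exact sum_comm' fun n k => by simp only [mem_range, mem_Icc, mem_Ico]; omega
    _ ≤ ∑ k ∈ Ico 1 K, C * (k : ℝ) ^ (α - 3 / 2) := by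
        refine sum_le_sum fun k hk => ?_
        have hk0 : (0 : ℝ) < k := by exact_mod_cast (mem_Ico.1 hk).1
        calc (∑ n ∈ Ico k K, f n) * (k : ℝ) ^ (α - 1)
            ≤ C * (k : ℝ) ^ (-(1 / 2) : ℝ) * (k : ℝ) ^ (α - 1) := by
              gcongr
              exact (sum_Ico_le_tsum_nat_add hf hs k K).trans (htail k (mem_Ico.1 hk).1)
          _ = C * (k : ℝ) ^ (α - 3 / 2) := by
              rw [mul_assoc, ← Real.rpow_add hk0]; ring_nf
    _ ≤ C * ∑' k : ℕ, (k : ℝ) ^ (α - 3 / 2) := by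
        rw [← mul_sum]
        exact mul_le_mul_of_nonneg_left (hM.sum_le_tsum _ fun k _ => by positivity) hC

lemma tendsto_one_sub_pgf_div_sqrt {f : ℕ → ℝ} (hf : ∀ n, 0 ≤ f n) (hfsum : ∑' n, f n = 1)
    (hS : Summable fun n : ℕ => f n * √n) :
    Tendsto (fun t => (1 - pgf f t) / √(1 - t)) (𝓝[<] 1) (𝓝 0) := by
  have hI : ∀ᶠ t in 𝓝[<] (1 : ℝ), t ∈ Set.Ioo 0 1 := Ioo_mem_nhdsLT zero_lt_one
  have hterm : ∀ n, Tendsto (fun t => f n * (1 - t ^ n) / √(1 - t)) (𝓝[<] 1) (𝓝 0) := by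
    intro n
    have hlim : Tendsto (fun t : ℝ => f n * n * √(1 - t)) (𝓝[<] 1) (𝓝 0) :=
      tendsto_nhdsWithin_of_tendsto_nhds <| by
        simpa using (((continuous_const (y := (1 : ℝ))).sub continuous_id).sqrt.const_mul
          (f n * n)).tendsto 1
    refine squeeze_zero' ?_ ?_ hlim <;> filter_upwards [hI] with t ⟨ht0, ht1⟩
    · exact div_nonneg (mul_nonneg (hf n) (sub_nonneg.2 (pow_le_one₀ ht0.le ht1.le)))
        (Real.sqrt_nonneg _)
    · have hx : 0 < √(1 - t) := Real.sqrt_pos.2 (by linarith)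
      rw [div_le_iff₀ hx, mul_assoc, Real.mul_self_sqrt (by linarith), mul_assoc]
      exact mul_le_mul_of_nonneg_left (one_sub_pow_le_mul_one_sub ht0.le n) (hf n)
  have hdom := tendsto_tsum_of_dominated_convergence hS hterm <| by
    filter_upwards [hI] with t ⟨ht0, ht1⟩ n
    have hx : 0 < √(1 - t) := Real.sqrt_pos.2 (by linarith)
    rw [Real.norm_of_nonneg (div_nonneg (mul_nonneg (hf n)
      (sub_nonneg.2 (pow_le_one₀ ht0.le ht1.le))) hx.le), div_le_iff₀ hx, mul_assoc]
    exact mul_le_mul_of_nonneg_left (one_sub_pow_le_sqrt ht0.le ht1.le n) (hf n)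
  rw [tsum_zero] at hdom
  refine hdom.congr' ?_
  filter_upwards [hI] with t ⟨ht0, ht1⟩
  rw [one_sub_pgf hf hfsum ht0.le ht1.le, tsum_div_const]

lemma not_summable_mul_sqrt_of_le_one_sub_pgf {f : ℕ → ℝ} (hf : ∀ n, 0 ≤ f n)
    (hfsum : ∑' n, f n = 1) {c : ℝ} (hc : 0 < c)
    (hlow : ∀ t, 0 < t → t < 1 → c * √(1 - t) ≤ 1 - pgf f t) :
    ¬ Summable fun n : ℕ => f n * √n := by
  intro hS
  have hle : ∀ᶠ t in 𝓝[<] (1 : ℝ), c ≤ (1 - pgf f t) / √(1 - t) := by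
    filter_upwards [Ioo_mem_nhdsLT zero_lt_one] with t ⟨ht0, ht1⟩
    exact (le_div_iff₀ (Real.sqrt_pos.2 (by linarith))).2 (hlow t ht0 ht1)
  exact hc.not_ge (ge_of_tendsto (tendsto_one_sub_pgf_div_sqrt hf hfsum hS) hle)

lemma sqrt_natCast_le_rpow {α : ℝ} (hα : 1 / 2 ≤ α) (n : ℕ) : √(n : ℝ) ≤ (n : ℝ) ^ α := by
  rcases Nat.eq_zero_or_pos n with rfl | hn
  · simp [Real.rpow_nonneg]
  rw [Real.sqrt_eq_rpow]
  exact Real.rpow_le_rpow_of_exponent_le (by exact_mod_cast hn) hα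

theorem stmt_13_general (a : ℕ → ℝ) (ha : ∀ n, 0 ≤ a n) (ha0 : 0 < a 0)
    (ha01 : a 0 + a 1 < 1)
    (hsum : ∑' n, a n = 1) (hμ : ∑' n : ℕ, (n : ℝ) * a n = 1)
    (hG2 : Summable (fun n : ℕ => (n : ℝ) * ((n : ℝ) - 1) * a n))
    (f : ℕ → ℝ) (hf : ∀ n, 0 ≤ f n) (hfsum : ∑' n, f n = 1)
    (hFeq : ∀ t : ℝ, 0 < t → t < 1 →
      ∑' n : ℕ, f n * t ^ n = t * ∑' n : ℕ, a n * (∑' m : ℕ, f m * t ^ m) ^ n) :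
    (∃ c₁ c₂ t₀ : ℝ, 0 < c₁ ∧ c₁ < c₂ ∧ 0 < t₀ ∧ t₀ < 1 ∧
      ∀ t : ℝ, t₀ < t → t < 1 →
        c₁ * Real.sqrt (1 - t) ≤ 1 - ∑' n : ℕ, f n * t ^ n ∧
        1 - ∑' n : ℕ, f n * t ^ n ≤ c₂ * Real.sqrt (1 - t)) ∧
    (∀ α : ℝ, 0 < α → α < 1 →
      (Summable (fun n : ℕ => f n * (n : ℝ) ^ α) ↔ α < 1 / 2)) := by
  obtain ⟨m, hm, ham⟩ := exists_two_le_pos_of_add_lt ha ha01 hsum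
  -- at `s = 0` the two bounds on `G(s) - s` give `2 a_m ≤ G''(1)`
  have hσ : 0 < secondFactorialMoment a := by
    have := (mul_sq_le_pgf_sub_self ha hsum hμ le_rfl zero_le_one hm).trans
      (pgf_sub_self_le ha hsum hμ hG2 le_rfl zero_le_one)
    simp only [sub_zero, one_pow, mul_one] at this
    linarith
  set c₁ := √(2 * a 0 / secondFactorialMoment a)
  set c₂ := √(1 / a m)
  have hc₁ : 0 < c₁ := by positivity
  have hc₂ : 0 < c₂ := by positivity
  have hlow t (ht0 : 0 < t) (ht1 : t < 1) :=
    sqrt_le_one_sub_pgf ha hsum hμ hG2 hσ hf hfsum ht0 ht1 (hFeq t ht0 ht1)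
  have hup t (ht0 : 0 < t) (ht1 : t < 1) :=
    one_sub_pgf_le_sqrt ha hsum hμ hm ham hf hfsum ht0 ht1 (hFeq t ht0 ht1)
  refine ⟨⟨c₁, c₁ + c₂, 1 / 2, hc₁, by linarith, by norm_num, by norm_num, fun t ht ht1 =>
    ⟨hlow t (by linarith) ht1, (hup t (by linarith) ht1).trans (by gcongr; linarith)⟩⟩,
    fun α hα0 _ => ⟨fun hS => ?_, fun hα => ?_⟩⟩
  · by_contra! hα
    exact not_summable_mul_sqrt_of_le_one_sub_pgf hf hfsum hc₁ hlow <|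
      hS.of_nonneg_of_le (fun n => mul_nonneg (hf n) (Real.sqrt_nonneg _))
        fun n => mul_le_mul_of_nonneg_left (sqrt_natCast_le_rpow hα n) (hf n)
  · exact summable_mul_rpow_of_tsum_nat_add_le hf (summable_of_tsum_ne_zero (hfsum ▸ one_ne_zero))
      (by positivity) (fun N hN => tsum_nat_add_le_of_one_sub_pgf_le hf hfsum hc₂.le hup hN)
      hα0 hα

theorem stmt_13 (a : ℕ → ℝ) (ha : ∀ n, 0 ≤ a n) (ha0 : 0 < a 0)
    (ha01 : a 0 + a 1 < 1)
    (hsum : ∑' n, a n = 1) (hμ : ∑' n : ℕ, (n : ℝ) * a n = 1)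
    (hG2 : Summable (fun n : ℕ => (n : ℝ) * ((n : ℝ) - 1) * a n))
    (f : ℕ → ℝ) (hf : ∀ n, 0 ≤ f n) (hf0 : f 0 = 0) (hfsum : ∑' n, f n = 1)
    (hFeq : ∀ t : ℝ, 0 < t → t < 1 →
      ∑' n : ℕ, f n * t ^ n = t * ∑' n : ℕ, a n * (∑' m : ℕ, f m * t ^ m) ^ n) :
    (∃ c₁ c₂ t₀ : ℝ, 0 < c₁ ∧ c₁ < c₂ ∧ 0 < t₀ ∧ t₀ < 1 ∧
      ∀ t : ℝ, t₀ < t → t < 1 →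
        c₁ * Real.sqrt (1 - t) ≤ 1 - ∑' n : ℕ, f n * t ^ n ∧
        1 - ∑' n : ℕ, f n * t ^ n ≤ c₂ * Real.sqrt (1 - t)) ∧
    (∀ α : ℝ, 0 < α → α < 1 →
      (Summable (fun n : ℕ => f n * (n : ℝ) ^ α) ↔ α < 1 / 2)) :=
  stmt_13_general a ha ha0 ha01 hsum hμ hG2 f hf hfsum hFeq
end

section
/- Let (a_n)_{n≥0} be nonnegative reals with a_0 > 0, a_0 + a_1 < 1, ∑_{n=0}^∞ a_n = 1, and μ := ∑_{n=1}^∞ n a_n > 1 (possibly μ = ∞). Let G(t) = ∑_{n=0}^∞ a_n t^n and G'(t) = ∑_{n=1}^∞ n a_n t^{n−1}. Then: (1) there exists a unique x₀ ∈ (0,1) with G(x₀) = x₀·G'(x₀); (2) R₀ := x₀/G(x₀) > 1; (3) for every x ≥ 0 with G(x) < ∞ one has x/G(x) ≤ R₀, so that for t > R₀ the equation x = t·G(x) has no solution x ≥ 0 with G(x) < ∞; (4) x₀ is the least nonnegative solution of x = R₀·G(x), and for every t ∈ [0, R₀] there exists a solution x ∈ [0, x₀] of x = t·G(x). -/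
/-!
Put `G(x) = ∑ aₙ xⁿ`. Since some `aₙ` with `n ≥ 2` is positive, `G` is strictly convex on
`[0, 1]`, so it lies strictly above each of its tangents. The equation `G(x) = x G'(x)` says that
the tangent at `x` passes through the origin; it has a root `x₀ ∈ (0, 1)` by the intermediate
value theorem, because `x G'(x) - G(x)` equals `-a₀ < 0` at `0` and tends to `μ - 1 > 0` at `1`.
Comparing `G` with its tangent at `x₀` gives `x G(x₀) < x₀ G(x)` for every other `x`: this
yields uniqueness of `x₀`, the bound `x / G(x) ≤ R₀` (with `x = 1` it gives `R₀ > 1`), and the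
minimality of `x₀` among the solutions of `x = R₀ G(x)`. For `t ≤ R₀` the function `t G(x) - x`
changes sign on `[0, x₀]`, which gives the last claim.
-/

open Set Filter Topology

lemma StrictConvexOn.add_mul_sub_lt_of_hasDerivAt {S : Set ℝ} {f : ℝ → ℝ} {f' x y : ℝ}
    (hf : StrictConvexOn ℝ S f) (hx : x ∈ S) (hy : y ∈ S) (hxy : x ≠ y)
    (hf' : HasDerivAt f f' y) : f y + f' * (x - y) < f x := by
  rcases hxy.lt_or_gt with hlt | hlt
  · have := hf.slope_lt_of_hasDerivAt hx hy hlt hf'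
    rw [slope_def_field, div_lt_iff₀ (sub_pos.2 hlt)] at this
    linarith
  · have := hf.lt_slope_of_hasDerivAt hy hx hlt hf'
    rw [slope_def_field, lt_div_iff₀ (sub_pos.2 hlt)] at this
    linarith

lemma pow_add_mul_sub_lt_pow {n : ℕ} (hn : 2 ≤ n) {x y : ℝ} (hx : 0 ≤ x) (hy : 0 ≤ y)
    (hxy : x ≠ y) : y ^ n + n * y ^ (n - 1) * (x - y) < x ^ n :=
  (strictConvexOn_pow hn).add_mul_sub_lt_of_hasDerivAt hx hy hxy (hasDerivAt_pow n y)

lemma exists_mem_Ioo_lt_sum_mul_pow {b : ℕ → ℝ} {c : ℝ} {N : ℕ}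
    (h : c < ∑ n ∈ Finset.range N, b n) :
    ∃ r ∈ Ioo (0 : ℝ) 1, c < ∑ n ∈ Finset.range N, b n * r ^ n := by
  have hcont : Continuous fun x : ℝ => ∑ n ∈ Finset.range N, b n * x ^ n := by fun_prop
  have h1 : c < ∑ n ∈ Finset.range N, b n * 1 ^ n := by simpa using h
  have hev : ∀ᶠ x in 𝓝[<] (1 : ℝ), c < ∑ n ∈ Finset.range N, b n * x ^ n :=
    nhdsWithin_le_nhds (hcont.continuousAt.eventually (lt_mem_nhds h1))
  obtain ⟨r, hr, hr01⟩ := (hev.and (Ioo_mem_nhdsLT zero_lt_one)).exists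
  exact ⟨r, hr01, hr⟩

noncomputable section

def genFun (a : ℕ → ℝ) (x : ℝ) : ℝ := ∑' n, a n * x ^ n

-- At `n = 0` the truncated exponent `n - 1 = 0` is harmless, as the coefficient vanishes.
def genFunDeriv (a : ℕ → ℝ) (x : ℝ) : ℝ := ∑' n : ℕ, (n : ℝ) * a n * x ^ (n - 1)

end

variable {a : ℕ → ℝ} {x y : ℝ}

lemma genFun_zero (a : ℕ → ℝ) : genFun a 0 = a 0 := by
  rw [genFun, tsum_eq_single 0 fun n hn => by simp [hn]]
  simp

lemma genFun_one (a : ℕ → ℝ) : genFun a 1 = ∑' n, a n := by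
  simp [genFun]

lemma mul_genFunDeriv (a : ℕ → ℝ) (x : ℝ) :
    x * genFunDeriv a x = genFun (fun n : ℕ => (n : ℝ) * a n) x := by
  rw [genFunDeriv, ← tsum_mul_left, genFun]
  refine tsum_congr fun n => ?_
  rcases n with _ | n
  · simp
  · simp only [Nat.add_sub_cancel, pow_succ]
    ring

lemma continuousOn_genFun {c : ℕ → ℝ} {r : ℝ} (hc : Summable fun n => |c n| * r ^ n) :
    ContinuousOn (genFun c) (Icc (-r) r) := by
  unfold genFun
  exact continuousOn_tsum (f := fun n x => c n * x ^ n) (fun n => by fun_prop) hc fun n x hx => by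
    rw [norm_mul, norm_pow, Real.norm_eq_abs, Real.norm_eq_abs]
    exact mul_le_mul_of_nonneg_left (pow_le_pow_left₀ (abs_nonneg x) (abs_le.2 hx) n)
      (abs_nonneg _)

lemma summable_genFun (ha : ∀ n, 0 ≤ a n) (hA : Summable a) (hx0 : 0 ≤ x) (hx1 : x ≤ 1) :
    Summable fun n => a n * x ^ n :=
  hA.of_nonneg_of_le (fun n => mul_nonneg (ha n) (pow_nonneg hx0 n))
    fun n => mul_le_of_le_one_right (ha n) (pow_le_one₀ hx0 hx1)

lemma summable_natCast_mul_genFun (ha : ∀ n, 0 ≤ a n) (hA : Summable a) (hx0 : 0 ≤ x)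
    (hx1 : x < 1) : Summable fun n : ℕ => (n : ℝ) * a n * x ^ n := by
  have hgeom : Summable fun n : ℕ => (n : ℝ) * x ^ n := by
    simpa using summable_pow_mul_geometric_of_norm_lt_one 1
      (by rwa [Real.norm_eq_abs, abs_of_nonneg hx0])
  refine (hgeom.mul_left (∑' n, a n)).of_nonneg_of_le
    (fun n => mul_nonneg (mul_nonneg n.cast_nonneg (ha n)) (pow_nonneg hx0 n)) fun n => ?_
  calc (n : ℝ) * a n * x ^ n = a n * (n * x ^ n) := by ring
    _ ≤ (∑' n, a n) * (n * x ^ n) :=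
      mul_le_mul_of_nonneg_right (hA.le_tsum n fun m _ => ha m)
        (mul_nonneg n.cast_nonneg (pow_nonneg hx0 n))

lemma summable_genFunDeriv (ha : ∀ n, 0 ≤ a n) (hA : Summable a) (hx0 : 0 < x) (hx1 : x < 1) :
    Summable fun n : ℕ => (n : ℝ) * a n * x ^ (n - 1) := by
  refine ((summable_natCast_mul_genFun ha hA hx0.le hx1).mul_left x⁻¹).congr fun n => ?_
  rcases n with _ | n
  · simp
  · simp only [Nat.add_sub_cancel, pow_succ]
    field_simp

lemma genFun_pos (ha : ∀ n, 0 ≤ a n) (ha0 : 0 < a 0) (hx : 0 ≤ x)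
    (hxs : Summable fun n => a n * x ^ n) : 0 < genFun a x :=
  ha0.trans_le <| by
    simpa [genFun] using hxs.le_tsum 0 fun n _ => mul_nonneg (ha n) (pow_nonneg hx n)

lemma exists_two_le_pos_of_tsum_lt (ha : ∀ n, 0 ≤ a n) (hA : Summable a) {N : ℕ}
    (hN : ∑' n, a n < ∑ n ∈ Finset.range N, n * a n) : ∃ n, 2 ≤ n ∧ 0 < a n := by
  by_contra! h
  have hle : ∀ n : ℕ, (n : ℝ) * a n ≤ a n := fun n => by
    rcases le_or_gt 2 n with hn | hn
    · simp [le_antisymm (h n hn) (ha n)]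
    · exact mul_le_of_le_one_left (ha n) (by exact_mod_cast Nat.lt_succ_iff.1 hn)
  have := (Finset.sum_le_sum fun n _ => hle n).trans
    (hA.sum_le_tsum (Finset.range N) fun n _ => ha n)
  linarith

lemma genFun_add_mul_genFunDeriv_lt (ha : ∀ n, 0 ≤ a n) (hA : Summable a)
    (h2 : ∃ n, 2 ≤ n ∧ 0 < a n) (hx : 0 ≤ x) (hxs : Summable fun n => a n * x ^ n)
    (hy0 : 0 < y) (hy1 : y < 1) (hxy : x ≠ y) :
    genFun a y + (x - y) * genFunDeriv a y < genFun a x := by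
  obtain ⟨n₀, hn₀, han₀⟩ := h2
  have hGy := summable_genFun ha hA hy0.le hy1.le
  have hG'y := (summable_genFunDeriv ha hA hy0 hy1).mul_left (x - y)
  have hterm : ∀ n, a n * y ^ n + (x - y) * (n * a n * y ^ (n - 1)) ≤ a n * x ^ n := fun n => by
    have := mul_le_mul_of_nonneg_left
      (pow_add_mul_le_add_pow hy0.le (by linarith : 0 ≤ 2 * y + (x - y)) n) (ha n)
    rw [add_sub_cancel] at this
    linarith
  have hterm₀ : a n₀ * y ^ n₀ + (x - y) * (n₀ * a n₀ * y ^ (n₀ - 1)) < a n₀ * x ^ n₀ := by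
    have := mul_lt_mul_of_pos_left (pow_add_mul_sub_lt_pow hn₀ hx hy0.le hxy) han₀
    linarith
  have := (hGy.add hG'y).tsum_lt_tsum hterm hterm₀ hxs
  rwa [hGy.tsum_add hG'y, tsum_mul_left] at this

-- `genFun a` lies strictly above its tangent at `y`, which passes through the origin.
lemma mul_genFun_lt_mul_genFun (ha : ∀ n, 0 ≤ a n) (hA : Summable a)
    (h2 : ∃ n, 2 ≤ n ∧ 0 < a n) (hy0 : 0 < y) (hy1 : y < 1)
    (hy : genFun a y = y * genFunDeriv a y) (hx : 0 ≤ x) (hxs : Summable fun n => a n * x ^ n)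
    (hxy : x ≠ y) : x * genFun a y < y * genFun a x :=
  calc x * genFun a y = y * (genFun a y + (x - y) * genFunDeriv a y) := by rw [hy]; ring
    _ < y * genFun a x :=
      mul_lt_mul_of_pos_left (genFun_add_mul_genFunDeriv_lt ha hA h2 hx hxs hy0 hy1 hxy) hy0

lemma div_genFun_le_div_genFun (ha : ∀ n, 0 ≤ a n) (ha0 : 0 < a 0) (hA : Summable a)
    (h2 : ∃ n, 2 ≤ n ∧ 0 < a n) (hy0 : 0 < y) (hy1 : y < 1)
    (hy : genFun a y = y * genFunDeriv a y) (hx : 0 ≤ x) (hxs : Summable fun n => a n * x ^ n) :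
    x / genFun a x ≤ y / genFun a y := by
  rw [div_le_div_iff₀ (genFun_pos ha ha0 hx hxs)
    (genFun_pos ha ha0 hy0.le (summable_genFun ha hA hy0.le hy1.le))]
  rcases eq_or_ne x y with rfl | hne
  · exact le_rfl
  · exact (mul_genFun_lt_mul_genFun ha hA h2 hy0 hy1 hy hx hxs hne).le

lemma eq_of_genFun_eq_mul_genFunDeriv (ha : ∀ n, 0 ≤ a n) (hA : Summable a)
    (h2 : ∃ n, 2 ≤ n ∧ 0 < a n) (hx0 : 0 < x) (hx1 : x < 1)
    (hx : genFun a x = x * genFunDeriv a x) (hy0 : 0 < y) (hy1 : y < 1)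
    (hy : genFun a y = y * genFunDeriv a y) : x = y := by
  by_contra hne
  have := mul_genFun_lt_mul_genFun ha hA h2 hy0 hy1 hy hx0.le
    (summable_genFun ha hA hx0.le hx1.le) hne
  have := mul_genFun_lt_mul_genFun ha hA h2 hx0 hx1 hx hy0.le
    (summable_genFun ha hA hy0.le hy1.le) (Ne.symm hne)
  linarith

lemma exists_genFun_eq_mul_genFunDeriv (ha : ∀ n, 0 ≤ a n) (ha0 : 0 < a 0) (hA : Summable a)
    {N : ℕ} (hN : ∑' n, a n < ∑ n ∈ Finset.range N, n * a n) :
    ∃ x₀ ∈ Ioo (0 : ℝ) 1, genFun a x₀ = x₀ * genFunDeriv a x₀ := by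
  obtain ⟨r, ⟨hr0, hr1⟩, hr⟩ := exists_mem_Ioo_lt_sum_mul_pow hN
  have hH := summable_natCast_mul_genFun ha hA hr0.le hr1
  have hsub : Icc 0 r ⊆ Icc (-r) r := Icc_subset_Icc (by linarith) le_rfl
  have hcont :
      ContinuousOn (fun x => genFun (fun n : ℕ => (n : ℝ) * a n) x - genFun a x) (Icc 0 r) := by
    refine ((continuousOn_genFun ?_).mono hsub).sub ((continuousOn_genFun (r := 1) ?_).mono
      (Icc_subset_Icc (by linarith) hr1.le))
    · simpa [abs_of_nonneg (ha _)] using hH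
    · simpa [abs_of_nonneg (ha _)] using hA
  have hHr : ∑ n ∈ Finset.range N, n * a n * r ^ n ≤ genFun (fun n : ℕ => (n : ℝ) * a n) r :=
    hH.sum_le_tsum _ fun n _ => mul_nonneg (mul_nonneg n.cast_nonneg (ha n)) (pow_nonneg hr0.le n)
  have hGr : genFun a r ≤ ∑' n, a n :=
    (summable_genFun ha hA hr0.le hr1.le).tsum_le_tsum
      (fun n => mul_le_of_le_one_right (ha n) (pow_le_one₀ hr0.le hr1.le)) hA
  obtain ⟨x₀, ⟨hx₀0, hx₀r⟩, hx₀⟩ := intermediate_value_Icc hr0.le hcont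
    (show (0 : ℝ) ∈ Icc _ _ from ⟨by simp [genFun_zero, ha0.le], by linarith⟩)
  dsimp only at hx₀
  have hx₀ne : x₀ ≠ 0 := by
    rintro rfl
    simp [genFun_zero] at hx₀
    linarith
  refine ⟨x₀, ⟨lt_of_le_of_ne hx₀0 hx₀ne.symm, hx₀r.trans_lt hr1⟩, ?_⟩
  rw [mul_genFunDeriv]
  linarith

lemma exists_mem_Icc_eq_mul_genFun (ha : ∀ n, 0 ≤ a n) (hA : Summable a) {t x₀ : ℝ}
    (hx₀0 : 0 ≤ x₀) (hx₀1 : x₀ ≤ 1) (ht : 0 ≤ t) (htx₀ : t * genFun a x₀ ≤ x₀) :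
    ∃ x ∈ Icc 0 x₀, x = t * genFun a x := by
  have hcont : ContinuousOn (fun x => t * genFun a x - x) (Icc 0 x₀) :=
    (continuousOn_const.mul ((continuousOn_genFun (r := 1) (by
      simpa [abs_of_nonneg (ha _)] using hA)).mono (Icc_subset_Icc (by norm_num) hx₀1))).sub
      continuousOn_id
  obtain ⟨x, hx, hx0⟩ := intermediate_value_Icc' hx₀0 hcont
    (show (0 : ℝ) ∈ Icc _ _ from ⟨by linarith, by simpa [genFun_zero] using mul_nonneg ht (ha 0)⟩)
  dsimp only at hx0
  exact ⟨x, hx, by linarith⟩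

theorem stmt_15_general (a : ℕ → ℝ) (ha : ∀ n, 0 ≤ a n) (ha0 : 0 < a 0)
    (hsum : ∑' n, a n = 1)
    (hμ : ∃ N : ℕ, 1 < ∑ n ∈ Finset.range N, (n : ℝ) * a n) :
    ∃ x₀ : ℝ, 0 < x₀ ∧ x₀ < 1 ∧
      (∑' n : ℕ, a n * x₀ ^ n) = x₀ * ∑' n : ℕ, (n : ℝ) * a n * x₀ ^ (n - 1) ∧
      (∀ y : ℝ, 0 < y → y < 1 →
        (∑' n : ℕ, a n * y ^ n) = y * (∑' n : ℕ, (n : ℝ) * a n * y ^ (n - 1)) →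
        y = x₀) ∧
      1 < x₀ / ∑' n : ℕ, a n * x₀ ^ n ∧
      (∀ x : ℝ, 0 ≤ x → Summable (fun n : ℕ => a n * x ^ n) →
        x / ∑' n : ℕ, a n * x ^ n ≤ x₀ / ∑' n : ℕ, a n * x₀ ^ n) ∧
      (∀ t : ℝ, x₀ / (∑' n : ℕ, a n * x₀ ^ n) < t →
        ¬ ∃ x : ℝ, 0 ≤ x ∧ Summable (fun n : ℕ => a n * x ^ n) ∧
          x = t * ∑' n : ℕ, a n * x ^ n) ∧
      (x₀ = (x₀ / ∑' n : ℕ, a n * x₀ ^ n) * ∑' n : ℕ, a n * x₀ ^ n) ∧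
      (∀ x : ℝ, 0 ≤ x → Summable (fun n : ℕ => a n * x ^ n) →
        x = (x₀ / ∑' n : ℕ, a n * x₀ ^ n) * (∑' n : ℕ, a n * x ^ n) → x₀ ≤ x) ∧
      (∀ t : ℝ, 0 ≤ t → t ≤ x₀ / ∑' n : ℕ, a n * x₀ ^ n →
        ∃ x : ℝ, 0 ≤ x ∧ x ≤ x₀ ∧ x = t * ∑' n : ℕ, a n * x ^ n) := by
  have hA : Summable a := by
    by_contra h
    simp [tsum_eq_zero_of_not_summable h] at hsum
  obtain ⟨N, hN⟩ := hμ
  rw [← hsum] at hN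
  have h2 := exists_two_le_pos_of_tsum_lt ha hA hN
  obtain ⟨x₀, ⟨hx₀0, hx₀1⟩, hx₀⟩ := exists_genFun_eq_mul_genFunDeriv ha ha0 hA hN
  have hG₀ : 0 < genFun a x₀ := genFun_pos ha ha0 hx₀0.le (summable_genFun ha hA hx₀0.le hx₀1.le)
  have key := fun {x : ℝ} => mul_genFun_lt_mul_genFun (x := x) ha hA h2 hx₀0 hx₀1 hx₀
  have hratio := fun {x : ℝ} => div_genFun_le_div_genFun (x := x) ha ha0 hA h2 hx₀0 hx₀1 hx₀
  refine ⟨x₀, hx₀0, hx₀1, hx₀,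
    fun y hy0 hy1 hy => eq_of_genFun_eq_mul_genFunDeriv ha hA h2 hy0 hy1 hy hx₀0 hx₀1 hx₀, ?_,
    fun _ hx hxs => hratio hx hxs, ?_, (div_mul_cancel₀ _ hG₀.ne').symm, ?_, fun t ht htR => ?_⟩
  · have := key zero_le_one (summable_genFun ha hA zero_le_one le_rfl) hx₀1.ne'
    rw [genFun_one, hsum] at this
    exact (one_lt_div hG₀).2 (by linarith)
  · rintro t (ht : x₀ / genFun a x₀ < t) ⟨x, hx, hxs, hxt : x = t * genFun a x⟩
    have := hratio hx hxs
    rw [(div_eq_iff (genFun_pos ha ha0 hx hxs).ne').2 hxt] at this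
    linarith
  · rintro x hx hxs (hxR : x = x₀ / genFun a x₀ * genFun a x)
    rw [div_mul_eq_mul_div, eq_div_iff hG₀.ne'] at hxR
    by_contra hlt
    linarith [key hx hxs (not_le.1 hlt).ne]
  · obtain ⟨x, ⟨hx0, hx1⟩, hx⟩ :=
      exists_mem_Icc_eq_mul_genFun ha hA hx₀0.le hx₀1.le ht ((le_div_iff₀ hG₀).1 htR)
    exact ⟨x, hx0, hx1, hx⟩

theorem stmt_15 (a : ℕ → ℝ) (ha : ∀ n, 0 ≤ a n) (ha0 : 0 < a 0)
    (ha01 : a 0 + a 1 < 1)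
    (hsum : ∑' n, a n = 1)
    (hμ : ∃ N : ℕ, 1 < ∑ n ∈ Finset.range N, (n : ℝ) * a n) :
    ∃ x₀ : ℝ, 0 < x₀ ∧ x₀ < 1 ∧
      (∑' n : ℕ, a n * x₀ ^ n) = x₀ * ∑' n : ℕ, (n : ℝ) * a n * x₀ ^ (n - 1) ∧
      (∀ y : ℝ, 0 < y → y < 1 →
        (∑' n : ℕ, a n * y ^ n) = y * (∑' n : ℕ, (n : ℝ) * a n * y ^ (n - 1)) →
        y = x₀) ∧
      1 < x₀ / ∑' n : ℕ, a n * x₀ ^ n ∧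
      (∀ x : ℝ, 0 ≤ x → Summable (fun n : ℕ => a n * x ^ n) →
        x / ∑' n : ℕ, a n * x ^ n ≤ x₀ / ∑' n : ℕ, a n * x₀ ^ n) ∧
      (∀ t : ℝ, x₀ / (∑' n : ℕ, a n * x₀ ^ n) < t →
        ¬ ∃ x : ℝ, 0 ≤ x ∧ Summable (fun n : ℕ => a n * x ^ n) ∧
          x = t * ∑' n : ℕ, a n * x ^ n) ∧
      (x₀ = (x₀ / ∑' n : ℕ, a n * x₀ ^ n) * ∑' n : ℕ, a n * x₀ ^ n) ∧
      (∀ x : ℝ, 0 ≤ x → Summable (fun n : ℕ => a n * x ^ n) →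
        x = (x₀ / ∑' n : ℕ, a n * x₀ ^ n) * (∑' n : ℕ, a n * x ^ n) → x₀ ≤ x) ∧
      (∀ t : ℝ, 0 ≤ t → t ≤ x₀ / ∑' n : ℕ, a n * x₀ ^ n →
        ∃ x : ℝ, 0 ≤ x ∧ x ≤ x₀ ∧ x = t * ∑' n : ℕ, a n * x ^ n) :=
  stmt_15_general a ha ha0 hsum hμ
end
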